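/- arXiv:1609.07833 — 12 statements merged into one kernel-verified Lean document; each statement's English description precedes it below -/
import Mathlib

section
/- Let q be a prime power, n a positive integer, and L(X) = Σ_{i=0}^{n-1} d_i X^{q^i} a q-polynomial with coefficients in F_{q^n}. Let M be the n×n matrix over F_{q^n} whose (i,j) entry is d_{(j-i) mod n}^{q^i} for 0 ≤ i,j ≤ n-1. Then the kernel of the F_q-linear map x ↦ L(x) from F_{q^n} to itself has F_q-dimension equal to n − rank(M). -/
/-!
Let `σ` be the Frobenius `x ↦ x ^ q` of `L / K`, `b` a `K`-basis of `L`, `B = (σ^t (b j))` its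
Moore matrix and `A` the matrix of `φ` in `b`. Applying `σ^i` to `φ (b j) = ∑ m, d m σ^m (b j)`
and using `σ^n = 1` gives `M B = B A`. By Artin's independence of the characters `σ^t`, `t < n`,
the Moore matrix is invertible, so `rank M = rank A = dim_K (range φ)`.
-/

open Module Matrix FiniteField

namespace Matrix

variable {K L m : Type*} [Field K] [Field L] [Algebra K L] [Fintype m] [DecidableEq m]

theorem rank_map_diagonal_algebraMap (w : m → K) :
    ((diagonal w).map (algebraMap K L)).rank = (diagonal w).rank := by
  classical
  rw [diagonal_map (map_zero _), rank_diagonal, rank_diagonal]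
  exact Fintype.card_congr (Equiv.subtypeEquivRight fun i => map_ne_zero _)

/-- `A` is equivalent to a diagonal matrix, and both equivalence and the rank of a diagonal matrix
survive extension of scalars. -/
theorem rank_map_algebraMap (A : Matrix m m K) :
    (A.map (algebraMap K L)).rank = A.rank := by
  obtain ⟨V, U, e, hV, hU, hVAU⟩ := exists_rank_normal_form A
  rw [← diagonal_one, ← diagonal_zero, fromBlocks_diagonal, submatrix_diagonal_equiv] at hVAU
  let f := (algebraMap K L).mapMatrix (m := m)
  have hVf := (isUnit_iff_isUnit_det _).1 (hV.map f)
  have hUf := (isUnit_iff_isUnit_det _).1 (hU.map f)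
  rw [isUnit_iff_isUnit_det] at hV hU
  calc (A.map (algebraMap K L)).rank
      = (f V * f A * f U).rank := by
        rw [rank_mul_eq_left_of_isUnit_det _ _ hUf, rank_mul_eq_right_of_isUnit_det _ _ hVf]
        rfl
    _ = (f (V * A * U)).rank := by rw [map_mul, map_mul]
    _ = (V * A * U).rank := by rw [hVAU]; exact rank_map_diagonal_algebraMap _
    _ = A.rank := by
        rw [rank_mul_eq_left_of_isUnit_det _ _ hU, rank_mul_eq_right_of_isUnit_det _ _ hV]

end Matrix

section Frobenius

variable (K : Type*) [Field K] [Fintype K]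

theorem FiniteField.frobeniusAlgHom_pow_apply (R : Type*) [CommRing R] [Algebra K R] (i : ℕ)
    (x : R) :
    (frobeniusAlgHom K R ^ i) x = x ^ Fintype.card K ^ i := by
  rw [AlgHom.coe_pow, coe_frobeniusAlgHom, pow_iterate]

variable (L : Type*) [Field L] [Algebra K L]

/-- The Moore matrix `(b j ^ q ^ t)_{t, j}` of a family `b`, with `q = #K` and `t < [L : K]`. -/
def mooreMatrix {ι : Type*} (b : ι → L) : Matrix (Fin (finrank K L)) ι L :=
  of fun t j => (frobeniusAlgHom K L ^ (t : ℕ)) (b j)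

theorem mooreMatrix_mul_map_toMatrix {ι : Type*} [Fintype ι] [DecidableEq ι]
    (b : Basis ι K L) (φ : L →ₗ[K] L) :
    mooreMatrix K L b * (LinearMap.toMatrix b b φ).map (algebraMap K L) =
      mooreMatrix K L (φ ∘ b) := by
  ext t j
  conv_rhs => rw [mooreMatrix, of_apply, Function.comp_apply, ← b.sum_repr (φ (b j))]
  simp only [mul_apply, mooreMatrix, of_apply, map_apply, LinearMap.toMatrix_apply, map_sum,
    Algebra.smul_def, map_mul, AlgHom.commutes, mul_comm]

/-- The matrix `(d (j - i) ^ q ^ i)_{i, j}` of the `q`-polynomial `∑ m, d m X ^ q ^ m`; the index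
`j - i` is subtraction in `Fin n`, i.e. modulo `n`. -/
noncomputable def qPolyMatrix [NeZero (finrank K L)] (d : Fin (finrank K L) → L) :
    Matrix (Fin (finrank K L)) (Fin (finrank K L)) L :=
  of fun i j => (frobeniusAlgHom K L ^ (i : ℕ)) (d (j - i))

variable [Finite L]

theorem FiniteField.frobeniusAlgHom_pow_mod_finrank (k : ℕ) :
    frobeniusAlgHom K L ^ (k % finrank K L) = frobeniusAlgHom K L ^ k := by
  rw [← orderOf_frobeniusAlgHom, pow_mod_orderOf]

theorem FiniteField.linearIndependent_frobeniusAlgHom_pow :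
    LinearIndependent L fun t : Fin (finrank K L) => (frobeniusAlgHom K L ^ (t : ℕ)).toLinearMap :=
  (linearIndependent_toLinearMap K L L).comp _ (bijective_frobeniusAlgHom_pow K L).injective

theorem isUnit_det_mooreMatrix (b : Basis (Fin (finrank K L)) K L) :
    IsUnit (mooreMatrix K L b).det := by
  rw [← isUnit_iff_isUnit_det, ← linearIndependent_rows_iff_isUnit, Fintype.linearIndependent_iff]
  intro g hg
  refine Fintype.linearIndependent_iff.1 (linearIndependent_frobeniusAlgHom_pow K L) g
    (b.ext fun j => ?_)
  simpa [mooreMatrix] using congrFun hg j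

theorem qPolyMatrix_mul_mooreMatrix [NeZero (finrank K L)] (d : Fin (finrank K L) → L)
    {ι : Type*} (b : ι → L) :
    qPolyMatrix K L d * mooreMatrix K L b =
      mooreMatrix K L ((fun x => ∑ m, d m * (frobeniusAlgHom K L ^ (m : ℕ)) x) ∘ b) := by
  ext i j
  simp only [mul_apply, qPolyMatrix, mooreMatrix, of_apply, Function.comp_apply, map_sum]
  refine (Fintype.sum_equiv (Equiv.addRight i) _ _ fun m => ?_).symm
  rw [map_mul, ← AlgHom.mul_apply, ← pow_add, ← frobeniusAlgHom_pow_mod_finrank K L (i + m),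
    Equiv.coe_addRight, add_sub_cancel_right, Fin.val_add, add_comm (m : ℕ)]

end Frobenius

theorem qpoly_kernel_dim_general (q n : ℕ) (hn : 0 < n)
    (K Lf : Type) [Field K] [Fintype K] [Field Lf] [Fintype Lf]
    [Algebra K Lf] (hcard : Fintype.card K = q)
    (hdim : Module.finrank K Lf = n)
    (d : Fin n → Lf)
    (φ : Lf →ₗ[K] Lf)
    (hφ : ∀ x, φ x = ∑ i : Fin n, d i * x ^ (q ^ (i : ℕ)))
    (M : Matrix (Fin n) (Fin n) Lf)
    (hM : ∀ i j : Fin n,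
      M i j = (d ⟨((j : ℕ) + n - (i : ℕ)) % n, Nat.mod_lt _ hn⟩) ^ (q ^ (i : ℕ))) :
    Module.finrank K (LinearMap.ker φ) = n - M.rank := by
  subst hcard hdim
  have : NeZero (finrank K Lf) := ⟨hn.ne'⟩
  have hφσ : ⇑φ = fun x => ∑ m, d m * (frobeniusAlgHom K Lf ^ (m : ℕ)) x := by
    funext x
    simp only [hφ, frobeniusAlgHom_pow_apply]
  have hMσ : M = qPolyMatrix K Lf d := by
    ext i j
    rw [hM, qPolyMatrix, of_apply, frobeniusAlgHom_pow_apply, Fin.sub_def]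
    congr 4
    have := i.isLt
    omega
  set b := finBasis K Lf
  set A := LinearMap.toMatrix b b φ
  have hB := isUnit_det_mooreMatrix K Lf b
  have hMB : M * mooreMatrix K Lf b = mooreMatrix K Lf b * A.map (algebraMap K Lf) := by
    rw [mooreMatrix_mul_map_toMatrix, hMσ, qPolyMatrix_mul_mooreMatrix, hφσ]
  have hrank : M.rank = finrank K (LinearMap.range φ) := calc
    M.rank = (M * mooreMatrix K Lf b).rank := (rank_mul_eq_left_of_isUnit_det _ _ hB).symm
    _ = (A.map (algebraMap K Lf)).rank := by rw [hMB, rank_mul_eq_right_of_isUnit_det _ _ hB]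
    _ = A.rank := rank_map_algebraMap A
    _ = finrank K (LinearMap.range φ) := by rw [rank_eq_finrank_range_toLin A b b, toLin_toMatrix]
  rw [hrank, ← LinearMap.finrank_range_add_finrank_ker φ]
  omega

/-- Kernel dimension of a q-polynomial equals `n - rank M`. -/
theorem qpoly_kernel_dim (q n : ℕ) (hq : IsPrimePow q) (hn : 0 < n)
    (K Lf : Type) [Field K] [Fintype K] [Field Lf] [Fintype Lf]
    [Algebra K Lf] (hcard : Fintype.card K = q)
    (hdim : Module.finrank K Lf = n)
    (d : Fin n → Lf)
    (φ : Lf →ₗ[K] Lf)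
    (hφ : ∀ x, φ x = ∑ i : Fin n, d i * x ^ (q ^ (i : ℕ)))
    (M : Matrix (Fin n) (Fin n) Lf)
    (hM : ∀ i j : Fin n,
      M i j = (d ⟨((j : ℕ) + n - (i : ℕ)) % n, Nat.mod_lt _ hn⟩) ^ (q ^ (i : ℕ))) :
    Module.finrank K (LinearMap.ker φ) = n - M.rank :=
  qpoly_kernel_dim_general q n hn K Lf hcard hdim d φ hφ M hM
end

section
/- Let q be an odd prime power, n ≥ 2, and let β ∈ F_{q^{2n}} be an element of multiplicative order (q^n+1)(q−1). Let δ ∈ F_{q^{2n}} \ F_{q^n}, let L(X) be a q-polynomial over F_{q^n}, and set W = {x + δ·L(x) : x ∈ F_{q^n}} and Q(x) = (x + δL(x))·(x + δ^{q^n} L(x)). Then the orbit {β^{2i}·W : i ≥ 0} of W under multiplication by β² is a partial spread of F_{q^{2n}} (i.e., any two distinct members intersect only in 0) if and only if Q is a planar function on F_{q^n}. -/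
/-!
Write `w x = x + δ L(x)`: an injective `𝔽_q`-linear map with image `W`. With `σ z = z ^ qⁿ`,
`Q x = w x * σ (w x) = w x ^ (qⁿ + 1)` is an `𝔽_q`-quadratic form with polar form
`w x * σ (w y) + σ (w x) * w y`; in odd characteristic such a form is planar iff it is two-to-one,
`Q x = Q y → x = ±y`.

If `β^(2i) W` and `β^(2j) W` share a nonzero point `β^(2i) w x = β^(2j) w y`, raising to the power
`qⁿ + 1` gives `Q x = λ² Q y` with `λ ∈ 𝔽_q^×`, because `β^(qⁿ+1)` has order `q - 1`. A two-to-one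
`Q` then gives `x = ±λ y`, and the two members coincide since `W` is an `𝔽_q`-subspace.
Conversely, if `Q x = Q y` then `u = w x / w y` satisfies `u^(qⁿ+1) = 1`, so `u` is a power of
`β²`; the partial spread property forces `u W = W`, whence `u^(qⁿ-1) = 1`, `u² = 1` and `x = ±y`.
-/

open Function QuadraticMap

namespace QuadraticMap

variable {R K M N : Type*} [AddCommGroup M] [AddCommGroup N]

theorem eq_or_eq_neg_of_injective_polar [CommRing R] [Module R M] [Module R N]
    {Q : QuadraticMap R M N} (hQ : ∀ a ≠ 0, Injective fun x => polar Q x a) {x y : M}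
    (h : Q x = Q y) : x = y ∨ x = -y := by
  by_cases hxy : x = y
  · exact .inl hxy
  refine .inr (eq_neg_of_add_eq_zero_left <| hQ (x - y) (sub_ne_zero.2 hxy) ?_)
  simp only [polar_zero_left, polar_add_left, polar_sub_right, polar_self, polar_comm Q y x, h]
  abel

theorem injective_polar_of_eq_or_eq_neg [Field K] [Module K M] [Module K N] (h2 : (2 : K) ≠ 0)
    {Q : QuadraticMap K M N} (hQ : ∀ x y, Q x = Q y → x = y ∨ x = -y) {a : M} (ha : a ≠ 0) :
    Injective fun x => polar Q x a := by
  intro x₁ x₂ hx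
  have hpolar : polar Q a (x₁ - x₂) = 0 := by
    rw [polar_comm, polar_sub_left]
    exact sub_eq_zero.2 hx
  have hQ' : Q (a + (x₁ - x₂)) = Q (a - (x₁ - x₂)) := by
    rw [QuadraticMap.map_add Q, sub_eq_add_neg a, QuadraticMap.map_add Q, Q.map_neg,
      polar_neg_right, hpolar, neg_zero]
  have eq_zero_of_add_self {z : M} (hz : z + z = 0) : z = 0 :=
    (smul_eq_zero.1 ((two_smul K z).trans hz)).resolve_left h2
  rcases hQ _ _ hQ' with h | h
  · refine sub_eq_zero.1 (eq_zero_of_add_self ?_)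
    calc _ = a + (x₁ - x₂) - (a - (x₁ - x₂)) := by abel
      _ = 0 := sub_eq_zero.2 h
  · refine absurd (eq_zero_of_add_self ?_) ha
    calc _ = a + (x₁ - x₂) - -(a - (x₁ - x₂)) := by abel
      _ = 0 := sub_eq_zero.2 h

theorem bijective_polar_iff [Field K] [Module K M] [Finite M] (h2 : (2 : K) ≠ 0)
    (Q : QuadraticMap K M M) :
    (∀ a ≠ 0, Bijective fun x => polar Q x a) ↔ ∀ x y, Q x = Q y → x = y ∨ x = -y :=
  ⟨fun h _ _ => eq_or_eq_neg_of_injective_polar fun a ha => (h a ha).injective,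
    fun h _ ha => Finite.injective_iff_bijective.1 (injective_polar_of_eq_or_eq_neg h2 h ha)⟩

end QuadraticMap

theorem isLinearMap_qPolynomial {K F ι : Type*} [Field K] [Fintype K] [CommRing F] [Algebra K F]
    (s : Finset ι) (d : ι → F) (e : ι → ℕ) :
    IsLinearMap K fun x : F => ∑ i ∈ s, d i * x ^ (Fintype.card K ^ e i) := by
  have hσ (i : ι) (x : F) :
      x ^ (Fintype.card K ^ e i) = (FiniteField.frobeniusAlgHom K F ^ e i) x := by
    rw [AlgHom.coe_pow, FiniteField.coe_frobeniusAlgHom, pow_iterate]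
  refine ⟨fun x y => ?_, fun c x => ?_⟩
  · simp only [hσ, map_add, mul_add, Finset.sum_add_distrib]
  · simp only [hσ, map_smul, Finset.smul_sum, mul_smul_comm]

theorem mem_range_algebraMap_of_pow_card_sub_one_eq_one {K E : Type*} [Field K] [Fintype K]
    [Field E] [Algebra K E] {g : E} (hg : g ^ (Fintype.card K - 1) = 1) :
    g ∈ Set.range (algebraMap K E) := by
  obtain ⟨γ, hγ⟩ := IsCyclic.exists_generator (α := Kˣ)
  have hord : orderOf (γ : K) = Fintype.card K - 1 := by
    rw [orderOf_units, orderOf_eq_card_of_forall_mem_zpowers hγ, Nat.card_units,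
      Nat.card_eq_fintype_card]
  have hγ' : IsPrimitiveRoot (algebraMap K E γ) (Fintype.card K - 1) :=
    hord ▸ (IsPrimitiveRoot.orderOf (γ : K)).map_of_injective (algebraMap K E).injective
  have : NeZero (Fintype.card K - 1) := ⟨by have := Fintype.one_lt_card (α := K); omega⟩
  obtain ⟨k, -, hk⟩ := hγ'.eq_pow_of_pow_eq_one hg
  exact ⟨γ ^ k, by rw [map_pow, hk]⟩

theorem exists_eq_pow_two_mul_of_pow_eq_one {R : Type*} [CommRing R] [IsDomain R] {β u : R}
    {m : ℕ} (hm : m ≠ 0) (hβ : orderOf β = 2 * m) (hu : u ^ m = 1) : ∃ k, u = β ^ (2 * k) := by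
  have : NeZero m := ⟨hm⟩
  have hβ2 : IsPrimitiveRoot (β ^ 2) m := by
    convert IsPrimitiveRoot.orderOf (β ^ 2)
    rw [orderOf_pow_of_dvd two_ne_zero (hβ ▸ dvd_mul_right 2 m), hβ,
      Nat.mul_div_cancel_left _ two_pos]
  obtain ⟨k, -, hk⟩ := hβ2.eq_pow_of_pow_eq_one hu
  exact ⟨k, by rw [← hk, pow_mul]⟩

open Finset in
theorem pow_card_eq_one_of_forall_mul_mem {G₀ : Type*} [CommGroupWithZero G₀] {T : Finset G₀}
    {u : G₀} (h0 : 0 ∉ T) (hT : ∀ z ∈ T, u * z ∈ T) : u ^ #T = 1 := by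
  classical
  obtain rfl | ⟨z, hz⟩ := T.eq_empty_or_nonempty
  · simp
  have hu : u ≠ 0 := by
    rintro rfl
    exact h0 (by simpa using hT z hz)
  have himage : T.image (u * ·) = T :=
    eq_of_subset_of_card_le (image_subset_iff.2 hT)
      (card_image_of_injective _ (mul_right_injective₀ hu)).ge
  have hprod : ∏ z ∈ T, z ≠ 0 := prod_ne_zero_iff.2 fun z hz h => h0 (h ▸ hz)
  refine mul_right_cancel₀ hprod ?_
  calc u ^ #T * ∏ z ∈ T, z = ∏ z ∈ T, u * z := by rw [prod_mul_distrib, prod_const]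
    _ = ∏ z ∈ T.image (u * ·), z :=
      (prod_image (f := id) fun _ _ _ _ h => mul_right_injective₀ hu h).symm
    _ = 1 * ∏ z ∈ T, z := by rw [himage, one_mul]

theorem pow_card_sub_one_eq_one_of_mul_mem_range {M G₀ : Type*} [Fintype M] [Zero M]
    [CommGroupWithZero G₀] {f : M → G₀} (hf : Injective f) (hf0 : f 0 = 0) {u : G₀} (hu0 : u ≠ 0)
    (hu : ∀ z, u * f z ∈ Set.range f) : u ^ (Fintype.card M - 1) = 1 := by
  classical
  have h0 : 0 ∈ Finset.univ.image f := hf0 ▸ Finset.mem_image_of_mem f (Finset.mem_univ 0)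
  rw [← Finset.card_univ, ← Finset.card_image_of_injective _ hf, ← Finset.card_erase_of_mem h0]
  refine pow_card_eq_one_of_forall_mul_mem (Finset.notMem_erase 0 _) fun z hz => ?_
  obtain ⟨hz0, x, -, rfl⟩ := Finset.mem_erase.1 hz |>.imp_right Finset.mem_image.1
  obtain ⟨y, hy⟩ := hu x
  exact Finset.mem_erase.2
    ⟨mul_ne_zero hu0 hz0, hy ▸ Finset.mem_image_of_mem f (Finset.mem_univ y)⟩

theorem image_algebraMap_mul_range_eq {K M E : Type*} [Field K] [AddCommGroup M] [Module K M]
    [Ring E] [Algebra K E] (w : M →ₗ[K] E) {μ : K} (hμ : μ ≠ 0) :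
    (algebraMap K E μ * ·) '' Set.range w = Set.range w := by
  have hsmul : (algebraMap K E μ * ·) ∘ w = w ∘ (μ • ·) := by
    ext x
    simp [Algebra.smul_def]
  rw [← Set.range_comp, hsmul, Surjective.range_comp fun x => ⟨μ⁻¹ • x, smul_inv_smul₀ hμ x⟩]

section GraphEmbedding

variable {K F E : Type*} [Field K] [Field F] [Field E] [Algebra F E] [Algebra K F] [Algebra K E]
  [IsScalarTower K F E]

def graphEmbedding (δ : E) (L : F →ₗ[K] F) : F →ₗ[K] E :=
  (IsScalarTower.toAlgHom K F E).toLinearMap + δ • (IsScalarTower.toAlgHom K F E).toLinearMap ∘ₗ L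

@[simp]
theorem graphEmbedding_apply (δ : E) (L : F →ₗ[K] F) (x : F) :
    graphEmbedding δ L x = algebraMap F E x + δ * algebraMap F E (L x) :=
  rfl

theorem graphEmbedding_injective {δ : E} (hδ : δ ∉ Set.range (algebraMap F E)) (L : F →ₗ[K] F) :
    Injective (graphEmbedding δ L) := by
  refine (injective_iff_map_eq_zero _).2 fun x hx => ?_
  rw [graphEmbedding_apply] at hx
  by_cases hL : L x = 0
  · simpa [hL] using hx
  refine absurd ⟨-x / L x, ?_⟩ hδ
  rw [map_div₀, map_neg, div_eq_iff (by simpa using hL)]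
  linear_combination -hx

end GraphEmbedding

section Frobenius

variable {K F E M : Type*} [Field K] [Field F] [Fintype F] [Field E] [Algebra F E] [Algebra K F]
  [Algebra K E] [IsScalarTower K F E]

local notation "σ" => FiniteField.frobeniusAlgHom F E

theorem mul_frobeniusAlgHom_self (z : E) : z * σ z = z ^ (Fintype.card F + 1) := by
  rw [FiniteField.coe_frobeniusAlgHom, pow_succ']

theorem frobeniusAlgHom_algebraMap_tower (c : K) : σ (algebraMap K E c) = algebraMap K E c := by
  rw [IsScalarTower.algebraMap_apply K F E, AlgHom.commutes]

theorem frobeniusAlgHom_graphEmbedding (δ : E) (L : F →ₗ[K] F) (x : F) :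
    σ (graphEmbedding δ L x) = algebraMap F E x + δ ^ Fintype.card F * algebraMap F E (L x) := by
  rw [graphEmbedding_apply, map_add, map_mul, AlgHom.commutes, AlgHom.commutes,
    FiniteField.coe_frobeniusAlgHom]

theorem algebraMap_polar_of_algebraMap_eq_pow [AddCommGroup M] {G : Type*} [FunLike G M E]
    [AddHomClass G M E] {w : G} {Q : M → F}
    (hQ : ∀ x, algebraMap F E (Q x) = w x ^ (Fintype.card F + 1)) (x y : M) :
    algebraMap F E (polar Q x y) = w x * σ (w y) + σ (w x) * w y := by
  simp only [polar, map_sub, hQ, map_add, ← mul_frobeniusAlgHom_self]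
  ring

def normQuadraticMap [AddCommGroup M] [Module K M] (w : M →ₗ[K] E) (Q : M → F)
    (hQ : ∀ x, algebraMap F E (Q x) = w x ^ (Fintype.card F + 1)) : QuadraticMap K M F :=
  .ofPolar Q
    (fun c x => (algebraMap F E).injective <| by
      simp only [hQ, map_smul, Algebra.smul_def, map_mul, ← IsScalarTower.algebraMap_apply,
        ← mul_frobeniusAlgHom_self, frobeniusAlgHom_algebraMap_tower]
      ring)
    (fun x x' y => (algebraMap F E).injective <| by
      simp only [map_add, algebraMap_polar_of_algebraMap_eq_pow hQ]
      ring)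
    (fun c x y => (algebraMap F E).injective <| by
      simp only [algebraMap_polar_of_algebraMap_eq_pow hQ, map_smul, Algebra.smul_def, map_mul,
        ← IsScalarTower.algebraMap_apply, frobeniusAlgHom_algebraMap_tower]
      ring)

end Frobenius

def IsPartialSpread {ι E : Type*} [Zero E] (S : ι → Set E) : Prop :=
  ∀ i j, S i ≠ S j → S i ∩ S j ⊆ {0}

section Spread

variable {K F E : Type*} [Field K] [Field F] [Fintype F] [Field E] [Algebra K F] [Algebra F E]
  [Algebra K E]

theorem eq_or_eq_neg_of_isPartialSpread [Fintype K] (hq : Odd (Fintype.card K)) {w : F →ₗ[K] E}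
    (hw : Injective w) {Q : F → F} (hQ : ∀ x, algebraMap F E (Q x) = w x ^ (Fintype.card F + 1))
    {β : E} (hβ : orderOf β = (Fintype.card F + 1) * (Fintype.card K - 1))
    (hS : IsPartialSpread fun i : ℕ => (β ^ (2 * i) * ·) '' Set.range w) {x y : F}
    (h : Q x = Q y) : x = y ∨ x = -y := by
  have hw0 : ∀ z, w z = 0 ↔ z = 0 := (injective_iff_map_eq_zero' w).1 hw
  have hQ0 {z : F} (hz : Q z = Q 0) : z = 0 := by
    refine (hw0 z).1 ((pow_eq_zero_iff (n := Fintype.card F + 1) (by omega)).1 ?_)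
    rw [← hQ, hz, hQ, map_zero, zero_pow (by omega)]
  by_cases hy : y = 0
  · subst hy
    exact .inl (hQ0 h)
  have hx : x ≠ 0 := by
    rintro rfl
    exact hy (hQ0 h.symm)
  have hwy : w y ≠ 0 := (hw0 y).not.2 hy
  set u := w x / w y with hu_def
  have hu0 : u ≠ 0 := div_ne_zero ((hw0 x).not.2 hx) hwy
  have hu : u ^ (Fintype.card F + 1) = 1 := by
    rw [div_pow, ← hQ, ← hQ, h, div_self (by rw [hQ]; exact pow_ne_zero _ hwy)]
  obtain ⟨s, hs⟩ := hq
  obtain ⟨k, hk⟩ := exists_eq_pow_two_mul_of_pow_eq_one (m := (Fintype.card F + 1) * s)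
    (Nat.mul_ne_zero (Nat.succ_ne_zero _) (by have := Fintype.one_lt_card (α := K); omega))
    (by rw [hβ, hs, Nat.add_sub_cancel]; ring) (by rw [pow_mul, hu, one_pow])
  have hxk : w x = β ^ (2 * k) * w y := by rw [← hk, hu_def, div_mul_cancel₀ _ hwy]
  have hSk : (β ^ (2 * k) * ·) '' Set.range w = Set.range w := by
    by_contra hne
    have := hS k 0 (by simpa using hne) ⟨⟨w y, Set.mem_range_self y, hxk.symm⟩, by simp⟩
    exact hx ((hw0 x).1 this)
  have hu' : u ^ (Fintype.card F - 1) = 1 :=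
    pow_card_sub_one_eq_one_of_mul_mem_range hw (map_zero w) hu0 fun z => by
      rw [hk, ← hSk]
      exact ⟨w z, Set.mem_range_self z, rfl⟩
  have hu2 : u ^ 2 = 1 := by
    have hcard : Fintype.card F + 1 = Fintype.card F - 1 + 2 := by
      have := Fintype.card_pos (α := F)
      omega
    rwa [hcard, pow_add, hu', one_mul] at hu
  rcases sq_eq_one_iff.1 hu2 with hu1 | hu1
  · exact .inl (hw (by rw [← div_eq_one_iff_eq hwy, ← hu_def, hu1]))
  · exact .inr (hw (by rw [map_neg, ← neg_one_mul, ← hu1, hu_def, div_mul_cancel₀ _ hwy]))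

variable [IsScalarTower K F E]

theorem exists_smul_eq_of_pow_mul_eq {w : F →ₗ[K] E} {Q : QuadraticMap K F F}
    (hQ : ∀ x, algebraMap F E (Q x) = w x ^ (Fintype.card F + 1))
    (hQ2 : ∀ x y, Q x = Q y → x = y ∨ x = -y) {β : E} (hβ0 : β ≠ 0)
    (hβK : β ^ (Fintype.card F + 1) ∈ Set.range (algebraMap K E)) {i j : ℕ} {x y : F}
    (hxy : β ^ (2 * i) * w x = β ^ (2 * j) * w y) : ∃ μ : K, μ ≠ 0 ∧ x = μ • y := by
  obtain ⟨γ, hγ⟩ := hβK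
  have hγ0 : γ ≠ 0 := by
    rintro rfl
    exact pow_ne_zero _ hβ0 (by rw [← hγ, map_zero])
  have hnorm : algebraMap K F γ ^ (2 * i) * Q x = algebraMap K F γ ^ (2 * j) * Q y := by
    apply (algebraMap F E).injective
    have := congrArg (· ^ (Fintype.card F + 1)) hxy
    simp only [mul_pow, ← pow_mul] at this
    simp only [map_mul, map_pow, hQ, ← IsScalarTower.algebraMap_apply, hγ, ← pow_mul]
    rwa [mul_comm (2 * i), mul_comm (2 * j)] at this
  set μ := γ ^ j / γ ^ i
  have hμ0 : μ ≠ 0 := div_ne_zero (pow_ne_zero _ hγ0) (pow_ne_zero _ hγ0)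
  have hQμ : Q x = Q (μ • y) := by
    have : algebraMap K F γ ≠ 0 := (map_ne_zero _).2 hγ0
    rw [Q.map_smul, Algebra.smul_def, map_mul, map_div₀, map_pow, map_pow]
    field_simp
    linear_combination hnorm
  rcases hQ2 _ _ hQμ with h | h
  · exact ⟨μ, hμ0, h⟩
  · exact ⟨-μ, neg_ne_zero.2 hμ0, by rw [h, neg_smul]⟩

theorem isPartialSpread_of_eq_or_eq_neg [Fintype K] {w : F →ₗ[K] E} {Q : QuadraticMap K F F}
    (hQ : ∀ x, algebraMap F E (Q x) = w x ^ (Fintype.card F + 1))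
    (hQ2 : ∀ x y, Q x = Q y → x = y ∨ x = -y) {β : E}
    (hβ : orderOf β = (Fintype.card F + 1) * (Fintype.card K - 1)) :
    IsPartialSpread fun i : ℕ => (β ^ (2 * i) * ·) '' Set.range w := by
  have hβ1 : β ^ ((Fintype.card F + 1) * (Fintype.card K - 1)) = 1 := hβ ▸ pow_orderOf_eq_one β
  have hβ0 : β ≠ 0 := (IsUnit.of_pow_eq_one hβ1 <| Nat.mul_ne_zero (Nat.succ_ne_zero _) <| by
    have := Fintype.one_lt_card (α := K)
    omega).ne_zero
  have hβK : β ^ (Fintype.card F + 1) ∈ Set.range (algebraMap K E) :=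
    mem_range_algebraMap_of_pow_card_sub_one_eq_one (by rwa [← pow_mul])
  rintro i j hne v ⟨⟨_, ⟨x, rfl⟩, hx⟩, ⟨_, ⟨y, rfl⟩, hy⟩⟩
  beta_reduce at hx hy hne
  by_contra hv
  have hwy : w y ≠ 0 := by
    rintro h
    rw [h, mul_zero] at hy
    exact hv hy.symm
  obtain ⟨μ, hμ, rfl⟩ := exists_smul_eq_of_pow_mul_eq hQ hQ2 hβ0 hβK (hx.trans hy.symm)
  have hβij : β ^ (2 * j) = β ^ (2 * i) * algebraMap K E μ := by
    refine mul_right_cancel₀ hwy ?_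
    rw [hy, ← hx, map_smul, Algebra.smul_def, mul_assoc]
  refine hne ?_
  simp only [hβij, mul_assoc]
  rw [← Set.image_image (β ^ (2 * i) * ·) (algebraMap K E μ * ·),
    image_algebraMap_mul_range_eq w hμ]

theorem isPartialSpread_iff [Fintype K] (hq : Odd (Fintype.card K)) {w : F →ₗ[K] E}
    (hw : Injective w) {Q : QuadraticMap K F F}
    (hQ : ∀ x, algebraMap F E (Q x) = w x ^ (Fintype.card F + 1)) {β : E}
    (hβ : orderOf β = (Fintype.card F + 1) * (Fintype.card K - 1)) :
    (IsPartialSpread fun i : ℕ => (β ^ (2 * i) * ·) '' Set.range w) ↔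
      ∀ x y, Q x = Q y → x = y ∨ x = -y :=
  ⟨fun hS _ _ => eq_or_eq_neg_of_isPartialSpread hq hw hQ hβ hS,
    fun hQ2 => isPartialSpread_of_eq_or_eq_neg hQ hQ2 hβ⟩

end Spread

theorem partial_spread_iff_planar_general (q n : ℕ) (hq : Odd q)
    (K Lf E : Type) [Field K] [Fintype K] [Field Lf] [Field E] [Fintype E]
    [Algebra K Lf] [Algebra Lf E] [Algebra K E] [IsScalarTower K Lf E]
    (hcard : Fintype.card K = q)
    (hdim : Module.finrank K Lf = n)
    (β : E) (hβ : orderOf β = (q ^ n + 1) * (q - 1))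
    (δ : E) (hδ : δ ∉ Set.range (algebraMap Lf E))
    (d : Fin n → Lf) (L : Lf → Lf)
    (hL : ∀ x, L x = ∑ i : Fin n, d i * x ^ (q ^ (i : ℕ)))
    (W : Set E)
    (hW : W = {v : E | ∃ x : Lf, v = algebraMap Lf E x + δ * algebraMap Lf E (L x)})
    (Q : Lf → Lf)
    (hQ : ∀ x, algebraMap Lf E (Q x) =
      (algebraMap Lf E x + δ * algebraMap Lf E (L x)) *
      (algebraMap Lf E x + δ ^ (q ^ n) * algebraMap Lf E (L x))) :
    (∀ i j : ℕ,
        (fun v => β ^ (2 * i) * v) '' W ≠ (fun v => β ^ (2 * j) * v) '' W →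
        ((fun v => β ^ (2 * i) * v) '' W ∩ (fun v => β ^ (2 * j) * v) '' W) ⊆ {0}) ↔
      (∀ a : Lf, a ≠ 0 →
        Function.Bijective (fun x => Q (x + a) - Q x - Q a)) := by
  subst hcard
  have : Finite Lf := Finite.of_injective _ (algebraMap Lf E).injective
  let _ : Fintype Lf := Fintype.ofFinite Lf
  have hcardLf : Fintype.card Lf = Fintype.card K ^ n := by
    rw [Module.card_eq_pow_finrank (K := K), hdim]
  let Lk : Lf →ₗ[K] Lf := (isLinearMap_qPolynomial Finset.univ d (fun i => (i : ℕ))).mk'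
  obtain rfl : L = Lk := funext hL
  set w := graphEmbedding δ Lk
  obtain rfl : W = Set.range w := hW.trans (Set.ext fun v => exists_congr fun x => eq_comm)
  have hQw : ∀ x, algebraMap Lf E (Q x) = w x ^ (Fintype.card Lf + 1) := fun x => by
    rw [← mul_frobeniusAlgHom_self, frobeniusAlgHom_graphEmbedding, hcardLf, hQ]
    rfl
  have h2 : (2 : K) ≠ 0 := Ring.two_ne_zero fun h => by
    have := FiniteField.even_card_iff_char_two.1 h
    rw [Nat.odd_iff] at hq
    omega
  rw [← hcardLf] at hβ
  exact (isPartialSpread_iff hq (graphEmbedding_injective hδ Lk) hQw hβ).trans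
    ((normQuadraticMap w Q hQw).bijective_polar_iff h2).symm

/-- **Lemma key (1).** The orbit of `W = {x + δL(x)}` under
multiplication by `β²` is a partial spread iff `Q(x) = (x+δL(x))(x+δ^{qⁿ}L(x))`
is a planar function on `F_{qⁿ}`. -/
theorem partial_spread_iff_planar (q n : ℕ) (hq : Odd q) (hq' : IsPrimePow q) (hn : 2 ≤ n)
    (K Lf E : Type) [Field K] [Fintype K] [Field Lf] [Field E] [Fintype E]
    [Algebra K Lf] [Algebra Lf E] [Algebra K E] [IsScalarTower K Lf E]
    (hcard : Fintype.card K = q)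
    (hdim : Module.finrank K Lf = n) (hdim2 : Module.finrank Lf E = 2)
    (β : E) (hβ : orderOf β = (q ^ n + 1) * (q - 1))
    (δ : E) (hδ : δ ∉ Set.range (algebraMap Lf E))
    (d : Fin n → Lf) (L : Lf → Lf)
    (hL : ∀ x, L x = ∑ i : Fin n, d i * x ^ (q ^ (i : ℕ)))
    (W : Set E)
    (hW : W = {v : E | ∃ x : Lf, v = algebraMap Lf E x + δ * algebraMap Lf E (L x)})
    (Q : Lf → Lf)
    (hQ : ∀ x, algebraMap Lf E (Q x) =
      (algebraMap Lf E x + δ * algebraMap Lf E (L x)) *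
      (algebraMap Lf E x + δ ^ (q ^ n) * algebraMap Lf E (L x))) :
    (∀ i j : ℕ,
        (fun v => β ^ (2 * i) * v) '' W ≠ (fun v => β ^ (2 * j) * v) '' W →
        ((fun v => β ^ (2 * i) * v) '' W ∩ (fun v => β ^ (2 * j) * v) '' W) ⊆ {0}) ↔
      (∀ a : Lf, a ≠ 0 →
        Function.Bijective (fun x => Q (x + a) - Q x - Q a)) :=
  partial_spread_iff_planar_general q n hq K Lf E hcard hdim β hβ δ hδ d L hL W hW Q hQ
end

section
/- Let q be an odd prime power, n ≥ 2, and β ∈ F_{q^{2n}} of multiplicative order (q^n+1)(q−1). Let δ ∈ F_{q^{2n}} \ F_{q^n}, let L(X) be a q-polynomial over F_{q^n}, W = {x + δL(x) : x ∈ F_{q^n}}, and Q(x) = (x + δL(x))(x + δ^{q^n}L(x)). Then the orbit of W under multiplication by β forms a spread of F_{q^{2n}} (a collection of q^n+1 n-dimensional subspaces partitioning the nonzero vectors) if and only if the map induced by Q on the quotient group F_{q^n}^*/F_q^* is a bijection. -/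
lemma my_exists_pow_eq {F : Type} [Field F] (h u : F) {m : ℕ} (hm : 0 < m)
    (hord : orderOf h = m) (hu : u ^ m = 1) : ∃ i, h ^ i = u := by
  haveI : NeZero m := ⟨hm.ne'⟩
  have hpr : IsPrimitiveRoot h m := hord ▸ IsPrimitiveRoot.orderOf h
  obtain ⟨i, _, hi⟩ := hpr.eq_pow_of_pow_eq_one hu
  exact ⟨i, hi⟩

lemma my_exists_gen (F : Type) [Field F] [Fintype F] :
    ∃ c : F, orderOf c = Fintype.card F - 1 := by
  obtain ⟨g, hg⟩ := IsCyclic.exists_generator (α := Fˣ)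
  refine ⟨(g : F), ?_⟩
  rw [orderOf_units, orderOf_eq_card_of_forall_mem_zpowers hg, Nat.card_units,
    Nat.card_eq_fintype_card]



/-- **Lemma key (2).** The orbit of `W = {x + δL(x)}` under
multiplication by `β` forms a spread of `F_{q^{2n}}` iff the map induced by
`Q(x) = (x+δL(x))(x+δ^{qⁿ}L(x))` on the quotient group `F_{qⁿ}^*/F_q^*`
is a bijection. -/
theorem spread_iff_perm_quotient (q n : ℕ) (hq : Odd q) (hq' : IsPrimePow q) (hn : 2 ≤ n)
    (K Lf E : Type) [Field K] [Fintype K] [Field Lf] [Field E] [Fintype E]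
    [Algebra K Lf] [Algebra Lf E] [Algebra K E] [IsScalarTower K Lf E]
    (hcard : Fintype.card K = q)
    (hdim : Module.finrank K Lf = n) (hdim2 : Module.finrank Lf E = 2)
    (β : E) (hβ : orderOf β = (q ^ n + 1) * (q - 1))
    (δ : E) (hδ : δ ∉ Set.range (algebraMap Lf E))
    (d : Fin n → Lf) (L : Lf → Lf)
    (hL : ∀ x, L x = ∑ i : Fin n, d i * x ^ (q ^ (i : ℕ)))
    (W : Set E)
    (hW : W = {v : E | ∃ x : Lf, v = algebraMap Lf E x + δ * algebraMap Lf E (L x)})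
    (Q : Lf → Lf)
    (hQ : ∀ x, algebraMap Lf E (Q x) =
      (algebraMap Lf E x + δ * algebraMap Lf E (L x)) *
      (algebraMap Lf E x + δ ^ (q ^ n) * algebraMap Lf E (L x))) :
    -- the orbit of `W` under `β` is a spread: every nonzero vector lies in
    -- exactly one member of the orbit
    ((∀ v : E, v ≠ 0 → ∃ i : ℕ, v ∈ (fun u => β ^ i * u) '' W) ∧
      (∀ v : E, v ≠ 0 → ∀ i j : ℕ,
        v ∈ (fun u => β ^ i * u) '' W → v ∈ (fun u => β ^ j * u) '' W →
        (fun u => β ^ i * u) '' W = (fun u => β ^ j * u) '' W)) ↔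
    -- `Q` induces a bijection of `F_{qⁿ}^*/F_q^*`
    ((∀ x : Lf, x ≠ 0 → Q x ≠ 0) ∧
      (∀ x y : Lf, x ≠ 0 → y ≠ 0 →
        (∃ c : K, Q y = algebraMap K Lf c * Q x) →
        ∃ c : K, y = algebraMap K Lf c * x) ∧
      (∀ z : Lf, z ≠ 0 → ∃ x : Lf, x ≠ 0 ∧
        ∃ c : K, c ≠ 0 ∧ z = algebraMap K Lf c * Q x)) := by
    classical
  -- Lf is finite
  haveI hLfFinite : Finite Lf := Finite.of_injective _ (algebraMap Lf E).injective
  letI : Fintype Lf := Fintype.ofFinite Lf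
  -- notation
  set φ := algebraMap Lf E with hφdef
  set ψ := algebraMap K Lf with hψdef
  set χ := algebraMap K E with hχdef
  have hφinj : Function.Injective φ := (algebraMap Lf E).injective
  have hχφψ : ∀ c : K, φ (ψ c) = χ c := by
    intro c; rw [hφdef, hψdef, hχdef, ← IsScalarTower.algebraMap_apply]
  -- numerology
  have hq2 : 2 ≤ q := hq'.two_le
  obtain ⟨p, k, hp, hk, hpk⟩ := hq'
  have hpp : p.Prime := Nat.prime_iff.mpr hp
  have hq3 : 3 ≤ q := by rcases hq with ⟨t, ht⟩; omega
  have hqn1 : 1 < q ^ n :=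
    lt_of_lt_of_le (by omega) (le_trans (le_of_eq (pow_one q).symm)
      (Nat.pow_le_pow_right (by omega) (by omega)))
  have hqn3 : 3 ≤ q ^ n :=
    le_trans hq3 (le_trans (le_of_eq (pow_one q).symm)
      (Nat.pow_le_pow_right (by omega) (by omega)))
  -- cardinalities
  have hcardLf : Fintype.card Lf = q ^ n := by
    rw [Module.card_eq_pow_finrank (K := K) (V := Lf), hcard, hdim]
  have hcardE : Fintype.card E = q ^ n * q ^ n := by
    rw [Module.card_eq_pow_finrank (K := Lf) (V := E), hcardLf, hdim2, pow_two]
  -- characteristic and Frobenius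
  haveI hfactp := Fact.mk hpp
  haveI hcharK : CharP K p := by
    obtain ⟨p', hcharK'⟩ := CharP.exists K
    haveI := hcharK'
    obtain ⟨m, hm', hcardK'⟩ := FiniteField.card K p'
    have hqp' : q = p' ^ (m : ℕ) := by rw [← hcard, hcardK']
    have hpe : p = p' := by
      have hdvd : p ∣ p' ^ (m : ℕ) := by
        rw [← hqp', ← hpk]; exact dvd_pow_self p (by omega)
      exact (Nat.prime_dvd_prime_iff_eq hpp hm').mp (hpp.dvd_of_dvd_pow hdvd)
    rwa [hpe]
  haveI hcharE : CharP E p := charP_of_injective_algebraMap (algebraMap K E).injective p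
  have hfrob : ∀ x y : E, (x + y) ^ (q ^ n) = x ^ (q ^ n) + y ^ (q ^ n) := by
    intro x y
    have h : q ^ n = p ^ (k * n) := by rw [pow_mul, hpk]
    rw [h]
    exact add_pow_char_pow x y p (k * n)
  -- fixed points of Frobenius powers
  have hfixLf : ∀ y : Lf, y ^ (q ^ n) = y := by
    intro y; rw [← hcardLf]; exact FiniteField.pow_card y
  have hfixφ : ∀ y : Lf, (φ y) ^ (q ^ n) = φ y := by
    intro y; rw [← map_pow, hfixLf]
  have hfixK : ∀ c : K, c ^ q = c := by
    intro c; rw [← hcard]; exact FiniteField.pow_card c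
  -- the map f
  set f : Lf → E := fun x => φ x + δ * φ (L x) with hfdef
  have hWf : ∀ v : E, v ∈ W ↔ ∃ x : Lf, v = f x := by
    intro v; rw [hW]; exact Iff.rfl
  have hL0 : L 0 = 0 := by
    rw [hL]
    apply Finset.sum_eq_zero
    intro i _
    rw [zero_pow (by positivity), mul_zero]
  have hf0 : f 0 = 0 := by simp [hfdef, hL0]
  have hfinj : Function.Injective f := by
    intro a b hab
    simp only [hfdef] at hab
    have h1 : φ a - φ b + δ * (φ (L a) - φ (L b)) = 0 := by linear_combination hab
    by_cases hLab : L a = L b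
    · rw [hLab, sub_self, mul_zero, add_zero, sub_eq_zero] at h1
      exact hφinj h1
    · exfalso
      apply hδ
      have hne : φ (L a) - φ (L b) ≠ 0 := fun h => hLab (hφinj (sub_eq_zero.mp h))
      refine ⟨(b - a) / (L a - L b), ?_⟩
      rw [map_div₀, div_eq_iff (by rw [map_sub]; exact hne), map_sub, map_sub]
      linear_combination -h1
  -- K-semilinearity
  have hLsmul : ∀ (c : K) (x : Lf), L (ψ c * x) = ψ c * L x := by
    intro c x
    have hcpow : ∀ i : ℕ, (ψ c) ^ (q ^ i) = ψ c := by
      intro i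
      rw [← map_pow]
      congr 1
      induction i with
      | zero => simp
      | succ m ih => rw [pow_succ, pow_mul, ih, hfixK]
    rw [hL, hL, Finset.mul_sum]
    apply Finset.sum_congr rfl
    intro i _
    rw [mul_pow, hcpow]
    ring
  have hfsmul : ∀ (c : K) (x : Lf), f (ψ c * x) = χ c * f x := by
    intro c x
    simp only [hfdef, hLsmul, map_mul, hχφψ]
    ring
  -- β basics
  have hβpow1 : β ^ ((q ^ n + 1) * (q - 1)) = 1 := by rw [← hβ]; exact pow_orderOf_eq_one β
  have hβne : β ≠ 0 := by
    intro h
    rw [h, zero_pow (Nat.mul_ne_zero (by omega) (by omega))] at hβpow1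
    exact zero_ne_one hβpow1
  set g : E := β ^ (q ^ n + 1) with hgdef
  have hgord : orderOf g = q - 1 := by
    rw [hgdef, orderOf_pow' β (by omega), hβ,
      Nat.gcd_eq_right (dvd_mul_right _ _), Nat.mul_div_cancel_left _ (by omega)]
  set b1 : E := β ^ (q - 1) with hb1def
  have hb1ord : orderOf b1 = q ^ n + 1 := by
    rw [hb1def, orderOf_pow' β (by omega), hβ,
      Nat.gcd_eq_right (dvd_mul_left _ _), Nat.mul_div_cancel _ (by omega)]
  -- generators and membership lemmas
  obtain ⟨ζK, hζK⟩ := my_exists_gen K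
  rw [hcard] at hζK
  have hζKne : ζK ≠ 0 := by
    intro h
    have h1 := pow_orderOf_eq_one ζK
    rw [hζK, h, zero_pow (by omega)] at h1
    exact zero_ne_one h1
  have hζKord : orderOf (χ ζK) = q - 1 := by
    have h := orderOf_injective χ.toMonoidHom (algebraMap K E).injective ζK
    exact h.trans hζK
  have memK : ∀ u : E, u ^ (q - 1) = 1 → ∃ c : K, c ≠ 0 ∧ χ c = u := by
    intro u hu
    obtain ⟨i, hi⟩ := my_exists_pow_eq (χ ζK) u (by omega) hζKord hu
    exact ⟨ζK ^ i, pow_ne_zero i hζKne, by rw [map_pow, hi]⟩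
  have memg : ∀ u : E, u ^ (q - 1) = 1 → ∃ i, g ^ i = u := fun u hu =>
    my_exists_pow_eq g u (by omega) hgord hu
  have memb1 : ∀ u : E, u ^ (q ^ n + 1) = 1 → ∃ i, b1 ^ i = u := fun u hu =>
    my_exists_pow_eq b1 u (by omega) hb1ord hu
  obtain ⟨ζL, hζL⟩ := my_exists_gen Lf
  rw [hcardLf] at hζL
  have hζLord : orderOf (φ ζL) = q ^ n - 1 := by
    have h := orderOf_injective φ.toMonoidHom (algebraMap Lf E).injective ζL
    exact h.trans hζL
  have memLf : ∀ u : E, u ^ (q ^ n) = u → ∃ z : Lf, φ z = u := by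
    intro u hu
    by_cases h0 : u = 0
    · exact ⟨0, by rw [map_zero, h0]⟩
    · have hu1 : u ^ (q ^ n - 1) = 1 := by
        have h2 : u ^ (q ^ n - 1) * u = 1 * u := by
          rw [← pow_succ, one_mul]
          have h3 : q ^ n - 1 + 1 = q ^ n := by omega
          rw [h3, hu]
        exact mul_right_cancel₀ h0 h2
      obtain ⟨i, hi⟩ := my_exists_pow_eq (φ ζL) u (by omega) hζLord hu1
      exact ⟨ζL ^ i, by rw [map_pow, hi]⟩
  -- norm facts
  have hNf : ∀ x : Lf, (f x) ^ (q ^ n + 1) = φ (Q x) := by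
    intro x
    have h2 : (f x) ^ (q ^ n) = φ x + δ ^ (q ^ n) * φ (L x) := by
      show (φ x + δ * φ (L x)) ^ (q ^ n) = _
      rw [hfrob, mul_pow, hfixφ, hfixφ]
    rw [pow_succ, h2, hQ x]
    show _ = f x * (φ x + δ ^ q ^ n * φ (L x))
    ring
  have hNβg : ∀ i : ℕ, (β ^ i) ^ (q ^ n + 1) = g ^ i := by
    intro i; rw [hgdef, ← pow_mul, ← pow_mul, mul_comm]
  have hNmem : ∀ v : E, ∃ z : Lf, φ z = v ^ (q ^ n + 1) := by
    intro v
    apply memLf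
    rw [← pow_mul]
    have h : (q ^ n + 1) * q ^ n = q ^ n * q ^ n + q ^ n := by ring
    rw [h, pow_add, ← hcardE, FiniteField.pow_card]
    exact (pow_succ' v _).symm
  have hqnn : 1 < q ^ n * q ^ n := lt_of_lt_of_le hqn1 (Nat.le_mul_of_pos_left _ (by omega))
  obtain ⟨ζE, hζE⟩ := my_exists_gen E
  rw [hcardE] at hζE
  have hζEne : ζE ≠ 0 := by
    intro h
    have h1 := pow_orderOf_eq_one ζE
    rw [hζE, h, zero_pow (by omega)] at h1
    exact zero_ne_one h1
  have hNsurj : ∀ z : Lf, z ≠ 0 → ∃ w : E, w ≠ 0 ∧ w ^ (q ^ n + 1) = φ z := by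
    intro z hz
    have hφz : φ z ≠ 0 := fun h => hz (hφinj (by rw [h, map_zero]))
    have h1 : (φ z) ^ (q ^ n * q ^ n - 1) = 1 := by
      rw [← hcardE]; exact FiniteField.pow_card_sub_one_eq_one _ hφz
    obtain ⟨t, ht⟩ := my_exists_pow_eq ζE (φ z) (by omega) hζE h1
    have h2 : (φ z) ^ (q ^ n - 1) = 1 := by
      rw [← map_pow, ← hcardLf, FiniteField.pow_card_sub_one_eq_one z hz, map_one]
    have h3 : ζE ^ (t * (q ^ n - 1)) = 1 := by rw [pow_mul, ht, h2]
    have h4 : (q ^ n * q ^ n - 1) ∣ t * (q ^ n - 1) := by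
      rw [← hζE]; exact orderOf_dvd_of_pow_eq_one h3
    have h5 : (q ^ n + 1) * (q ^ n - 1) = q ^ n * q ^ n - 1 := by
      have h6 : 1 ≤ q ^ n := by omega
      zify [h6, (by omega : 1 ≤ q ^ n * q ^ n)]
      ring
    have h6 : (q ^ n + 1) ∣ t := by
      rw [← h5] at h4
      exact (Nat.mul_dvd_mul_iff_right (by omega : 0 < q ^ n - 1)).mp h4
    obtain ⟨s, hs⟩ := h6
    refine ⟨ζE ^ s, pow_ne_zero s hζEne, ?_⟩
    rw [← pow_mul, mul_comm s, ← hs, ht]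
  -- g is in the image of K
  obtain ⟨c0, hc0ne, hc0⟩ := memK g (by rw [hgdef, ← pow_mul, hβpow1])
  have hχpow : ∀ c : K, c ≠ 0 → (χ c) ^ (q - 1) = 1 := by
    intro c hc
    rw [← map_pow, ← hcard, FiniteField.pow_card_sub_one_eq_one c hc, map_one]
  -- membership in the translates
  have hSmem : ∀ (i : ℕ) (v : E), v ∈ (fun u => β ^ i * u) '' W ↔ ∃ x : Lf, v = β ^ i * f x := by
    intro i v
    constructor
    · rintro ⟨w, hw, rfl⟩
      obtain ⟨x, rfl⟩ := (hWf w).mp hw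
      exact ⟨x, rfl⟩
    · rintro ⟨x, rfl⟩
      exact ⟨f x, (hWf _).mpr ⟨x, rfl⟩, rfl⟩
  -- Q is nonvanishing on nonzero elements (unconditionally)
  have hfne : ∀ x : Lf, x ≠ 0 → f x ≠ 0 := fun x hx h => hx (hfinj (h.trans hf0.symm))
  have hQne : ∀ x : Lf, x ≠ 0 → Q x ≠ 0 := by
    intro x hx h0
    have h1 := hNf x
    rw [h0, map_zero] at h1
    exact pow_ne_zero _ (hfne x hx) h1
  constructor
  · -- spread → bijection on the quotient
    rintro ⟨hcov, huniq⟩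
    -- shifting translates
    have hSshift : ∀ (t a b : ℕ),
        (fun u => β ^ a * u) '' W = (fun u => β ^ b * u) '' W →
        (fun u => β ^ (t + a) * u) '' W = (fun u => β ^ (t + b) * u) '' W := by
      intro t a b h
      have h' : ∀ w : E, (∃ x : Lf, w = β ^ a * f x) ↔ (∃ x : Lf, w = β ^ b * f x) :=
        fun w => (hSmem a w).symm.trans ((Set.ext_iff.mp h w).trans (hSmem b w))
      ext v
      rw [hSmem, hSmem]
      constructor
      · rintro ⟨x, rfl⟩
        obtain ⟨y, hy⟩ := (h' (β ^ a * f x)).mp ⟨x, rfl⟩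
        exact ⟨y, by rw [pow_add, mul_assoc, hy, pow_add, mul_assoc]⟩
      · rintro ⟨x, rfl⟩
        obtain ⟨y, hy⟩ := (h' (β ^ b * f x)).mpr ⟨x, rfl⟩
        exact ⟨y, by rw [pow_add, mul_assoc, hy, pow_add, mul_assoc]⟩
    -- the counting argument
    have hcount : ∀ dd : ℕ, 0 < dd → dd ≤ q ^ n →
        (∀ a : ℕ, (fun u => β ^ a * u) '' W = (fun u => β ^ (a % dd) * u) '' W) → False := by
      intro dd hdd0 hdd hmod
      set T : Finset E := (Finset.range dd).biUnion
        (fun s => (Finset.univ.filter (fun x : Lf => x ≠ 0)).image (fun x => β ^ s * f x))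
        with hT
      have hTcard : T.card ≤ dd * (q ^ n - 1) := by
        calc T.card ≤ ∑ s ∈ Finset.range dd,
            ((Finset.univ.filter (fun x : Lf => x ≠ 0)).image (fun x => β ^ s * f x)).card :=
              Finset.card_biUnion_le
        _ ≤ ∑ _s ∈ Finset.range dd, (q ^ n - 1) := by
            apply Finset.sum_le_sum
            intro s _
            calc ((Finset.univ.filter (fun x : Lf => x ≠ 0)).image (fun x => β ^ s * f x)).card
                ≤ (Finset.univ.filter (fun x : Lf => x ≠ 0)).card := Finset.card_image_le
            _ = q ^ n - 1 := by
                rw [Finset.filter_ne' Finset.univ (0 : Lf),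
                  Finset.card_erase_of_mem (Finset.mem_univ _), Finset.card_univ, hcardLf]
        _ = dd * (q ^ n - 1) := by rw [Finset.sum_const, Finset.card_range, smul_eq_mul]
      have hsub : (Finset.univ : Finset E) ⊆ insert (0 : E) T := by
        intro v _
        by_cases hv : v = 0
        · simp [hv]
        · obtain ⟨i, hvi⟩ := hcov v hv
          rw [hmod i] at hvi
          obtain ⟨x, hx⟩ := (hSmem _ v).mp hvi
          have hxne : x ≠ 0 := by
            rintro rfl; rw [hf0, mul_zero] at hx; exact hv hx
          apply Finset.mem_insert_of_mem
          refine Finset.mem_biUnion.mpr ⟨i % dd, Finset.mem_range.mpr (Nat.mod_lt _ hdd0), ?_⟩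
          exact Finset.mem_image.mpr ⟨x, by simp [hxne], hx.symm⟩
      have h1 : q ^ n * q ^ n ≤ 1 + dd * (q ^ n - 1) := by
        calc q ^ n * q ^ n = Fintype.card E := hcardE.symm
        _ = (Finset.univ : Finset E).card := Finset.card_univ.symm
        _ ≤ (insert (0 : E) T).card := Finset.card_le_card hsub
        _ ≤ T.card + 1 := Finset.card_insert_le _ _
        _ ≤ 1 + dd * (q ^ n - 1) := by omega
      have h2 : dd * (q ^ n - 1) ≤ q ^ n * (q ^ n - 1) := Nat.mul_le_mul_right _ hdd
      have h3 : q ^ n * (q ^ n - 1) = q ^ n * q ^ n - q ^ n := by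
        zify [(by omega : 1 ≤ q ^ n), Nat.le_mul_of_pos_left (q ^ n) (by omega : 0 < q ^ n)]
        ring
      omega
    -- periodicity infrastructure
    have hgne : g ≠ 0 := by rw [hgdef]; exact pow_ne_zero _ hβne
    have hSM0 : (fun u => β ^ (q ^ n + 1) * u) '' W = (fun u => β ^ 0 * u) '' W := by
      ext v
      rw [hSmem, hSmem]
      constructor
      · rintro ⟨x, rfl⟩
        exact ⟨ψ c0 * x, by rw [pow_zero, one_mul, hfsmul, hc0, ← hgdef]⟩
      · rintro ⟨x, rfl⟩
        refine ⟨ψ c0⁻¹ * x, ?_⟩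
        rw [pow_zero, one_mul, hfsmul, map_inv₀, hc0, ← hgdef,
          ← mul_assoc, mul_inv_cancel₀ hgne, one_mul]
    -- a period `t` propagates to all residues
    have hper_iter : ∀ t : ℕ,
        ((fun u => β ^ t * u) '' W = (fun u => β ^ 0 * u) '' W) →
        ∀ a : ℕ, (fun u => β ^ a * u) '' W = (fun u => β ^ (a % t) * u) '' W := by
      intro t ht a
      by_cases ht0 : t = 0
      · subst ht0; rw [Nat.mod_zero]
      · have hone : ∀ b : ℕ, (fun u => β ^ (b + t) * u) '' W = (fun u => β ^ b * u) '' W := by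
          intro b
          have := hSshift b t 0 ht
          rwa [Nat.add_zero] at this
        have hmany : ∀ c b : ℕ, (fun u => β ^ (b + t * c) * u) '' W = (fun u => β ^ b * u) '' W := by
          intro c
          induction c with
          | zero => intro b; rw [Nat.mul_zero, Nat.add_zero]
          | succ m ih =>
              intro b
              have h1 : b + t * (m + 1) = (b + t) + t * m := by ring
              rw [h1, ih (b + t), hone b]
        have ha : a = a % t + t * (a / t) := by
          rw [Nat.mod_add_div]
        calc (fun u => β ^ a * u) '' W
            = (fun u => β ^ (a % t + t * (a / t)) * u) '' W := by rw [← ha]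
        _ = (fun u => β ^ (a % t) * u) '' W := hmany (a / t) (a % t)
    -- the key divisibility
    have hkey : ∀ m : ℕ,
        ((fun u => β ^ m * u) '' W = (fun u => β ^ 0 * u) '' W) → (q ^ n + 1) ∣ m := by
      intro m hm
      set M := q ^ n + 1 with hM
      set r := m % M with hr
      have hrlt : r < M := Nat.mod_lt _ (by omega)
      have hSr : (fun u => β ^ r * u) '' W = (fun u => β ^ 0 * u) '' W := by
        have h1 := hper_iter M hSM0 m
        rw [← hr] at h1
        rw [← h1, hm]
      by_cases hr0 : r = 0
      · exact Nat.dvd_of_mod_eq_zero hr0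
      · exfalso
        exact hcount r (by omega) (by omega) (hper_iter r hSr)
    refine ⟨hQne, ?_, ?_⟩
    · -- injectivity on the quotient
      rintro x y hx hy ⟨c, hc⟩
      have hcne : c ≠ 0 := by
        rintro rfl
        rw [map_zero, zero_mul] at hc
        exact hQne y hy hc
      obtain ⟨i, hgi⟩ := memg (χ c) (hχpow c hcne)
      have hNeq : (f y) ^ (q ^ n + 1) = (β ^ i * f x) ^ (q ^ n + 1) := by
        rw [hNf, mul_pow, hNβg, hNf, hgi, hc, map_mul, hχφψ]
      have hden : β ^ i * f x ≠ 0 := mul_ne_zero (pow_ne_zero _ hβne) (hfne x hx)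
      have hu1 : (f y / (β ^ i * f x)) ^ (q ^ n + 1) = 1 := by
        rw [div_pow, hNeq, div_self (pow_ne_zero _ hden)]
      obtain ⟨kk, hkk⟩ := memb1 _ hu1
      have hfyeq : f y = β ^ ((q - 1) * kk + i) * f x := by
        have h1 : f y = b1 ^ kk * (β ^ i * f x) := by
          rw [hkk, div_mul_cancel₀ _ hden]
        rw [h1, hb1def, ← pow_mul, pow_add, mul_assoc]
      have h0mem : f y ∈ (fun u => β ^ 0 * u) '' W :=
        (hSmem 0 _).mpr ⟨y, by rw [pow_zero, one_mul]⟩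
      have hmmem : f y ∈ (fun u => β ^ ((q - 1) * kk + i) * u) '' W :=
        (hSmem _ _).mpr ⟨x, hfyeq⟩
      have hSm := huniq (f y) (hfne y hy) ((q - 1) * kk + i) 0 hmmem h0mem
      obtain ⟨s, hs⟩ := hkey _ hSm
      refine ⟨c0 ^ s, ?_⟩
      apply hfinj
      rw [hfsmul, map_pow, hc0, hfyeq, hs, hgdef, pow_mul]
    · -- surjectivity on the quotient
      intro z hz
      obtain ⟨w, hw0, hwN⟩ := hNsurj z hz
      obtain ⟨i, hwi⟩ := hcov w hw0
      obtain ⟨x, hxw⟩ := (hSmem i w).mp hwi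
      have hxne : x ≠ 0 := by
        rintro rfl; rw [hf0, mul_zero] at hxw; exact hw0 hxw
      refine ⟨x, hxne, c0 ^ i, pow_ne_zero i hc0ne, ?_⟩
      apply hφinj
      rw [map_mul, hχφψ, ← hwN, hxw, mul_pow, hNβg, hNf, ← hc0, ← map_pow]
  · -- bijection on the quotient → spread
    rintro ⟨hQ0, hQinj, hQsurj⟩
    have hχne : ∀ c : K, c ≠ 0 → χ c ≠ 0 :=
      fun c hc h => hc (map_eq_zero_iff χ (algebraMap K E).injective |>.mp h)
    constructor
    · -- coverage
      intro v hv
      obtain ⟨z, hzv⟩ := hNmem v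
      have hz0 : z ≠ 0 := by
        rintro rfl
        rw [map_zero] at hzv
        exact pow_ne_zero _ hv hzv.symm
      obtain ⟨x, hx0, c, hc0', hzc⟩ := hQsurj z hz0
      obtain ⟨i, hgi⟩ := memg (χ c) (hχpow c hc0')
      have hden : β ^ i * f x ≠ 0 := mul_ne_zero (pow_ne_zero _ hβne) (hfne x hx0)
      have hNeq : v ^ (q ^ n + 1) = (β ^ i * f x) ^ (q ^ n + 1) := by
        rw [← hzv, hzc, mul_pow, hNβg, hNf, hgi, map_mul, hχφψ]
      have hu1 : (v / (β ^ i * f x)) ^ (q ^ n + 1) = 1 := by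
        rw [div_pow, hNeq, div_self (pow_ne_zero _ hden)]
      obtain ⟨kk, hkk⟩ := memb1 _ hu1
      refine ⟨(q - 1) * kk + i, (hSmem _ _).mpr ⟨x, ?_⟩⟩
      have h1 : v = b1 ^ kk * (β ^ i * f x) := by
        rw [hkk, div_mul_cancel₀ _ hden]
      rw [h1, hb1def, ← pow_mul, pow_add, mul_assoc]
    · -- uniqueness
      intro v hv i j hvi hvj
      obtain ⟨x, hxv⟩ := (hSmem i v).mp hvi
      obtain ⟨y, hyv⟩ := (hSmem j v).mp hvj
      have hx0 : x ≠ 0 := by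
        rintro rfl; rw [hf0, mul_zero] at hxv; exact hv hxv
      have hy0 : y ≠ 0 := by
        rintro rfl; rw [hf0, mul_zero] at hyv; exact hv hyv
      have hN : χ (c0 ^ i) * φ (Q x) = χ (c0 ^ j) * φ (Q y) := by
        have h1 : (β ^ i * f x) ^ (q ^ n + 1) = (β ^ j * f y) ^ (q ^ n + 1) := by
          rw [← hxv, ← hyv]
        rw [mul_pow, mul_pow, hNβg, hNβg, hNf, hNf, ← hc0, ← map_pow, ← map_pow] at h1
        exact h1
      have hχj : χ (c0 ^ j) ≠ 0 := hχne _ (pow_ne_zero j hc0ne)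
      have hcc : Q y = ψ (c0 ^ i / c0 ^ j) * Q x := by
        apply hφinj
        rw [map_mul, hχφψ, map_div₀, div_mul_eq_mul_div, eq_div_iff hχj]
        linear_combination -hN
      obtain ⟨c', hc'⟩ := hQinj x y hx0 hy0 ⟨_, hcc⟩
      have hc'0 : c' ≠ 0 := by
        rintro rfl
        rw [map_zero, zero_mul] at hc'
        exact hy0 hc'
      have hfyx : f y = χ c' * f x := by rw [hc', hfsmul]
      have hββ : β ^ i = β ^ j * χ c' := by
        have h1 : β ^ i * f x = (β ^ j * χ c') * f x := by
          rw [mul_assoc, ← hfyx, ← hxv, ← hyv]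
        exact mul_right_cancel₀ (hfne x hx0) h1
      ext w
      rw [hSmem, hSmem]
      constructor
      · rintro ⟨u, rfl⟩
        refine ⟨ψ c' * u, ?_⟩
        rw [hfsmul, hββ]
        ring
      · rintro ⟨u, rfl⟩
        refine ⟨ψ c'⁻¹ * u, ?_⟩
        rw [hfsmul, map_inv₀, hββ]
        have := hχne c' hc'0
        field_simp
end

section
/- Let q be an odd prime power, w a nonsquare in F_q, N > 1 an integer, and let a = (a_0,...,a_{N-1}) and b = (b_0,...,b_{N-1}) be sequences of elements of F_q with supports I_1 = {i : a_i ≠ 0} and I_2 = {i : b_i ≠ 0}. If a_i·a_j = w·b_i·b_j for all distinct i, j, then either both |I_1| ≤ 1 and |I_2| ≤ 1, or I_1 = I_2 and |I_1| = |I_2| = 2. -/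
open Finset in
/-- **Remark on supports.** If `aᵢaⱼ = w bᵢbⱼ` for all distinct
`i, j` with `w` a nonsquare, then either both supports have size at most one,
or the supports are equal of size two. -/
theorem supports_of_nonsquare_relation (F : Type) [Field F] [Fintype F] [DecidableEq F]
    (hodd : Odd (Fintype.card F))
    (w : F) (hw : ¬ IsSquare w)
    (N : ℕ) (hN : 1 < N)
    (a b : Fin N → F)
    (hab : ∀ i j : Fin N, i ≠ j → a i * a j = w * (b i * b j)) :
    ((univ.filter (fun i => a i ≠ 0)).card ≤ 1 ∧
      (univ.filter (fun i => b i ≠ 0)).card ≤ 1) ∨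
    (univ.filter (fun i => a i ≠ 0) = univ.filter (fun i => b i ≠ 0) ∧
      (univ.filter (fun i => a i ≠ 0)).card = 2 ∧
      (univ.filter (fun i => b i ≠ 0)).card = 2) := by
  have hw0 : w ≠ 0 := fun h => hw ⟨0, by rw [h]; ring⟩
  set S1 := univ.filter (fun i => a i ≠ 0) with hS1
  set S2 := univ.filter (fun i => b i ≠ 0) with hS2
  have mem1 : ∀ i, i ∈ S1 ↔ a i ≠ 0 := by intro i; simp [hS1]
  have mem2 : ∀ i, i ∈ S2 ↔ b i ≠ 0 := by intro i; simp [hS2]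
  -- key equivalence for distinct indices
  have key : ∀ i j : Fin N, i ≠ j → (a i ≠ 0 ∧ a j ≠ 0 ↔ b i ≠ 0 ∧ b j ≠ 0) := by
    intro i j hij
    have h := hab i j hij
    constructor
    · rintro ⟨ha1, ha2⟩
      have : w * (b i * b j) ≠ 0 := h ▸ mul_ne_zero ha1 ha2
      have hb : b i * b j ≠ 0 := fun hz => this (by rw [hz, mul_zero])
      exact ⟨left_ne_zero_of_mul hb, right_ne_zero_of_mul hb⟩
    · rintro ⟨hb1, hb2⟩
      have : a i * a j ≠ 0 := h ▸ mul_ne_zero hw0 (mul_ne_zero hb1 hb2)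
      exact ⟨left_ne_zero_of_mul this, right_ne_zero_of_mul this⟩
  by_cases h1 : S1.card ≤ 1
  · left
    refine ⟨h1, ?_⟩
    by_contra h2
    push_neg at h2
    rw [Finset.one_lt_card] at h2
    obtain ⟨i, hi, j, hj, hij⟩ := h2
    have := (key i j hij).2 ⟨(mem2 i).1 hi, (mem2 j).1 hj⟩
    exact absurd (Finset.one_lt_card.2 ⟨i, (mem1 i).2 this.1, j, (mem1 j).2 this.2, hij⟩)
      (not_lt.2 h1)
  · right
    push_neg at h1
    rw [Finset.one_lt_card] at h1
    obtain ⟨i, hi, j, hj, hij⟩ := h1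
    have hai := (mem1 i).1 hi
    have haj := (mem1 j).1 hj
    have hbij := (key i j hij).1 ⟨hai, haj⟩
    -- S1 = S2
    have hEq : S1 = S2 := by
      ext k
      rw [mem1, mem2]
      rcases eq_or_ne k i with rfl | hki
      · constructor
        · intro _; exact hbij.1
        · intro _; exact hai
      · constructor
        · intro hak
          exact ((key k i hki).1 ⟨hak, hai⟩).1
        · intro hbk
          exact ((key k i hki).2 ⟨hbk, hbij.1⟩).1
    -- card ≤ 2
    have hle : S1.card ≤ 2 := by
      by_contra h
      push_neg at h
      rw [Finset.two_lt_card_iff] at h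
      obtain ⟨x, y, z, hx, hy, hz, hxy, hxz, hyz⟩ := h
      have hax := (mem1 x).1 hx
      have hay := (mem1 y).1 hy
      have haz := (mem1 z).1 hz
      have hbx := (mem2 x).1 (hEq ▸ hx)
      have hby := (mem2 y).1 (hEq ▸ hy)
      have hbz := (mem2 z).1 (hEq ▸ hz)
      have e1 := hab x y hxy
      have e2 := hab x z hxz
      have e3 := hab y z hyz
      -- a x ^ 2 = w * b x ^ 2
      have hsq : a x ^ 2 = w * b x ^ 2 := by
        have hcancel : (w * (b y * b z)) ≠ 0 := mul_ne_zero hw0 (mul_ne_zero hby hbz)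
        have : a x ^ 2 * (a y * a z) = w * b x ^ 2 * (a y * a z) := by
          linear_combination (a x * a z) * e1 + (w * (b x * b y)) * e2 - w * b x ^ 2 * e3
        exact mul_right_cancel₀ (mul_ne_zero hay haz) this
      exact hw ⟨a x / b x, by field_simp; linear_combination (-1 : F) * hsq⟩
    have h2 : 2 ≤ S1.card := Finset.one_lt_card.2 ⟨i, hi, j, hj, hij⟩
    have : S1.card = 2 := le_antisymm hle h2
    exact ⟨hEq, this, hEq ▸ this⟩
end

section
/- Let q be an odd prime power, m a positive integer, and ζ ∈ F_{q^{2m}} with ζ^{q^m − 1} = −1. Define Ψ: F_{q^{2m}} × F_{q^{2m}} → F_{q^m}³ by Ψ(x_0ζ + x_1, y_0ζ + y_1) = (x_1 y_1, x_0 y_0, x_0 y_1 + x_1 y_0) for x_0,x_1,y_0,y_1 ∈ F_{q^m}. Then the image of Ψ equals {(A,B,C) ∈ F_{q^m}³ : C² − 4AB is a square in F_{q^m}}, and Ψ(x,y) = (0,0,0) if and only if x = 0 or y = 0. -/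
/-!
`Ψ(x, y)` lists the coefficients of `(x₁X + x₀Y)(y₁X + y₀Y) = A X² + C XY + B Y²`, and since
`q` is odd such a binary form factors over `F_{q^m}` exactly when its discriminant `C² - 4AB`
is a square. For the zeros, `ζ ∉ F_{q^m}` because every `c ∈ F_{q^m}` has
`c^{q^m-1} ∈ {0, 1}` while `ζ^{q^m-1} = -1`; hence `x₀ζ + x₁ = 0` forces `x₀ = x₁ = 0`, and a
product of two linear forms over a domain vanishes only if one of them does.
-/

theorem FiniteField.two_ne_zero_of_odd_card {K : Type*} [Field K] [Fintype K]
    (h : Odd (Fintype.card K)) : (2 : K) ≠ 0 :=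
  Ring.two_ne_zero fun hK ↦ by
    simpa [Nat.odd_iff.mp h] using FiniteField.even_card_iff_char_two.mp hK

theorem FiniteField.notMem_range_algebraMap_of_pow_card_sub_one_eq_neg_one
    {K E : Type*} [Field K] [Fintype K] [CommRing E] [Algebra K E] (h2 : (2 : E) ≠ 0) {ζ : E}
    (hζ : ζ ^ (Fintype.card K - 1) = -1) : ζ ∉ Set.range (algebraMap K E) := by
  rintro ⟨c, rfl⟩
  by_cases hc : c = 0
  · have hexp : Fintype.card K - 1 ≠ 0 := by have := Fintype.one_lt_card (α := K); omega
    rw [hc, map_zero, zero_pow hexp] at hζ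
    exact h2 (by linear_combination 2 * hζ)
  · rw [← map_pow, FiniteField.pow_card_sub_one_eq_one c hc, map_one] at hζ
    exact h2 (by linear_combination hζ)

theorem algebraMap_mul_add_algebraMap_eq_zero_iff {K E : Type*} [Field K] [Ring E]
    [Nontrivial E] [Algebra K E] {ζ : E} (hζ : ζ ∉ Set.range (algebraMap K E)) (a b : K) :
    algebraMap K E a * ζ + algebraMap K E b = 0 ↔ a = 0 ∧ b = 0 := by
  refine ⟨fun h ↦ ?_, fun ⟨ha, hb⟩ ↦ by simp [ha, hb]⟩
  by_cases ha : a = 0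
  · simpa [ha] using h
  · have hsmul : a • ζ = -algebraMap K E b := by
      rw [Algebra.smul_def]; exact eq_neg_of_add_eq_zero_left h
    refine absurd ⟨-(a⁻¹ * b), ?_⟩ hζ
    rw [map_neg, map_mul, ← Algebra.smul_def, ← smul_neg, ← hsmul, inv_smul_smul₀ ha]

theorem exists_linear_factors_iff_isSquare_discrim {K : Type*} [Field K] (h2 : (2 : K) ≠ 0)
    (A B C : K) :
    (∃ x0 x1 y0 y1 : K, x1 * y1 = A ∧ x0 * y0 = B ∧ x0 * y1 + x1 * y0 = C) ↔
      IsSquare (C ^ 2 - 4 * A * B) := by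
  refine ⟨fun ⟨x0, x1, y0, y1, hA, hB, hC⟩ ↦
    ⟨x0 * y1 - x1 * y0, by subst hA hB hC; ring⟩, ?_⟩
  rintro ⟨d, hd⟩
  by_cases hA : A = 0
  · subst hA
    by_cases hB : B = 0
    · exact ⟨1, 0, 0, C, by ring, by simp [hB], by ring⟩
    · exact ⟨1, C / B, B, 0, by ring, by ring, by field_simp; ring⟩
  · refine ⟨(C + d) / (2 * A), 1, (C - d) / 2, A, by ring, ?_, by field_simp; ring⟩
    field_simp
    linear_combination hd

theorem linear_mul_linear_coeffs_eq_zero_iff {R : Type*} [CommRing R]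
    [NoZeroDivisors R] (x0 x1 y0 y1 : R) :
    (x1 * y1 = 0 ∧ x0 * y0 = 0 ∧ x0 * y1 + x1 * y0 = 0) ↔
      (x0 = 0 ∧ x1 = 0) ∨ (y0 = 0 ∧ y1 = 0) := by
  grind [mul_eq_zero]

theorem Psi_image_and_zeros_general (q m : ℕ) (hq : Odd q)
    (Fm E : Type) [Field Fm] [Fintype Fm] [Field E]
    [Algebra Fm E]
    (hcard : Fintype.card Fm = q ^ m)
    (ζ : E) (hζ : ζ ^ (q ^ m - 1) = -1) :
    (∀ A B C : Fm,
      (∃ x0 x1 y0 y1 : Fm,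
        x1 * y1 = A ∧ x0 * y0 = B ∧ x0 * y1 + x1 * y0 = C) ↔
      IsSquare (C ^ 2 - 4 * A * B)) ∧
    (∀ x0 x1 y0 y1 : Fm,
      (x1 * y1 = 0 ∧ x0 * y0 = 0 ∧ x0 * y1 + x1 * y0 = 0) ↔
      (algebraMap Fm E x0 * ζ + algebraMap Fm E x1 = 0 ∨
        algebraMap Fm E y0 * ζ + algebraMap Fm E y1 = 0)) := by
  have h2 : (2 : Fm) ≠ 0 := FiniteField.two_ne_zero_of_odd_card (hcard ▸ hq.pow)
  have h2E : (2 : E) ≠ 0 := by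
    rw [← map_ofNat (algebraMap Fm E) 2]; exact (map_ne_zero _).mpr h2
  have hζK : ζ ∉ Set.range (algebraMap Fm E) :=
    FiniteField.notMem_range_algebraMap_of_pow_card_sub_one_eq_neg_one h2E (hcard ▸ hζ)
  refine ⟨exists_linear_factors_iff_isSquare_discrim h2, fun x0 x1 y0 y1 ↦ ?_⟩
  rw [linear_mul_linear_coeffs_eq_zero_iff,
    algebraMap_mul_add_algebraMap_eq_zero_iff hζK, algebraMap_mul_add_algebraMap_eq_zero_iff hζK]

/-- **Lemma Ψ.** With `ζ^{q^m-1} = -1`, the image of the map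
`Ψ(x₀ζ+x₁, y₀ζ+y₁) = (x₁y₁, x₀y₀, x₀y₁+x₁y₀)` is exactly the set of
triples `(A,B,C)` with `C² - 4AB` a square in `F_{q^m}`, and `Ψ(x,y) = 0`
iff `x = 0` or `y = 0`. -/
theorem Psi_image_and_zeros (q m : ℕ) (hq : Odd q) (hq' : IsPrimePow q) (hm : 0 < m)
    (Fm E : Type) [Field Fm] [Fintype Fm] [Field E]
    [Algebra Fm E]
    (hcard : Fintype.card Fm = q ^ m)
    (hdim : Module.finrank Fm E = 2)
    (ζ : E) (hζ : ζ ^ (q ^ m - 1) = -1) :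
    (∀ A B C : Fm,
      (∃ x0 x1 y0 y1 : Fm,
        x1 * y1 = A ∧ x0 * y0 = B ∧ x0 * y1 + x1 * y0 = C) ↔
      IsSquare (C ^ 2 - 4 * A * B)) ∧
    (∀ x0 x1 y0 y1 : Fm,
      (x1 * y1 = 0 ∧ x0 * y0 = 0 ∧ x0 * y1 + x1 * y0 = 0) ↔
      (algebraMap Fm E x0 * ζ + algebraMap Fm E x1 = 0 ∨
        algebraMap Fm E y0 * ζ + algebraMap Fm E y1 = 0)) :=
  Psi_image_and_zeros_general q m hq Fm E hcard ζ hζ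
end

section
/- Let q be even, n ≥ 2, and suppose n is even. Let δ ∈ F_{q^{2n}} \ F_{q^n}, fix k with gcd(n,k) = 1, and set Q(x) = (x^{q^k} + δx)(x^{q^k} + δ^{q^n}x). Then Q is not a permutation of F_{q^n}. (The case L(x) = x^{q^k}.) -/
/-!
Over `F = 𝔽_{qⁿ}` the map is `Q(x) = x^{2qᵏ} + a x^{qᵏ+1} + b x²` with `a = δ + δ^{qⁿ} ≠ 0` and
`b = δ^{1+qⁿ}`. If `Q` permuted `F`, the Walsh sum `∑ₓ (-1)^{Tr(y Q(x))}` would vanish for every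
`y ≠ 0`, whereas its square is `qⁿ` as soon as the polar form `Tr(ya (x^{qᵏ}u + u^{qᵏ}x))` of
`Tr(y Q)` has trivial radical. Take `g = ya` primitive. Since `Tr(z x^{qᵏ}) = Tr(z^{qᵐ} x)` for
`m = (n-1)k`, a nonzero `u` in the radical satisfies `(gu)^{qᵐ} = g u^{qᵏ}`. Raising this to the
power `(qⁿ-1)/(q²-1)` lands in the subgroup of order `q²-1`, on which `x ↦ x^{qʲ}` depends only on
the parity of `j`; as `k` and `m` are odd this gives `q ≡ 1 (mod q²-1)`, which is absurd.
-/

open Finset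

section Walsh

variable {V : Type*} [Fintype V]

def walshSum (f : V → ZMod 2) : ℤ := ∑ x, (-1) ^ (f x).val

theorem walshSum_comp_bijective {W : Type*} [Fintype W] (f : V → ZMod 2) {σ : W → V}
    (hσ : Function.Bijective σ) : walshSum (f ∘ σ) = walshSum f :=
  Fintype.sum_bijective σ hσ _ _ fun _ ↦ rfl

theorem neg_one_pow_val_add (s t : ZMod 2) :
    (-1 : ℤ) ^ (s + t).val = (-1) ^ s.val * (-1) ^ t.val := by
  fin_cases s <;> fin_cases t <;> rfl

variable [AddCommGroup V]

theorem walshSum_eq_zero (f : V →+ ZMod 2) (hf : f ≠ 0) : walshSum f = 0 := by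
  obtain ⟨w, hw⟩ := DFunLike.ne_iff.mp hf
  have hsign : (-1 : ℤ) ^ (f w).val = -1 := by
    generalize f w = t at hw
    fin_cases t
    · exact absurd rfl hw
    · rfl
  have hneg : walshSum f = -walshSum f :=
    calc walshSum f = ∑ x, (-1) ^ (f (x + w)).val :=
          (Fintype.sum_equiv (Equiv.addRight w) _ _ fun _ ↦ rfl).symm
      _ = -walshSum f := by
          simp only [map_add, neg_one_pow_val_add, hsign, walshSum, mul_neg_one, sum_neg_distrib]
  omega

theorem sq_walshSum_eq_card (f : V → ZMod 2) (B : V → V →+ ZMod 2)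
    (hf : ∀ x u, f (x + u) = f x + f u + B u x) (hB : ∀ u ≠ 0, B u ≠ 0) :
    walshSum f ^ 2 = Fintype.card V := by
  have hsq : ∀ t : ZMod 2, (-1 : ℤ) ^ t.val * (-1) ^ t.val = 1 := by decide
  have hshift : walshSum f ^ 2 = ∑ u, ∑ x, (-1) ^ (f x).val * (-1) ^ (f (x + u)).val :=
    calc walshSum f ^ 2 = ∑ x, ∑ u, (-1) ^ (f x).val * (-1) ^ (f (x + u)).val := by
          rw [sq, walshSum, sum_mul_sum]
          exact sum_congr rfl fun x _ ↦ (Fintype.sum_equiv (Equiv.addLeft x) _ _ fun _ ↦ rfl).symm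
      _ = _ := sum_comm
  rw [hshift, sum_eq_single 0]
  · simp [hsq]
  · intro u _ hu
    simp only [hf, neg_one_pow_val_add, ← mul_assoc, hsq, one_mul, ← mul_sum]
    rw [← walshSum, walshSum_eq_zero (B u) (hB u hu), mul_zero]
  · simp

end Walsh

section Trace

variable {p : ℕ} [Fact p.Prime] {F : Type*} [Field F] [Finite F] [CharP F p]
  [Algebra (ZMod p) F]

theorem trace_pow_char_pow (x : F) (i : ℕ) :
    Algebra.trace (ZMod p) F (x ^ p ^ i) = Algebra.trace (ZMod p) F x := by
  induction i with
  | zero => rw [pow_zero, pow_one]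
  | succ i ih =>
    have := Algebra.trace_eq_of_algEquiv (FiniteField.frobeniusAlgEquiv (ZMod p) F p) (x ^ p ^ i)
    rwa [FiniteField.frobeniusAlgEquiv_apply, ZMod.card, ← pow_mul, ← pow_succ, ih] at this

theorem trace_mul_pow_char_pow (z x : F) {i j : ℕ} (hx : x ^ p ^ (i + j) = x) :
    Algebra.trace (ZMod p) F (z * x ^ p ^ i) = Algebra.trace (ZMod p) F (z ^ p ^ j * x) := by
  rw [← trace_pow_char_pow _ j, mul_pow, ← pow_mul, ← pow_add, hx]

end Trace

theorem Nat.pow_modEq_pow_mod_two {q : ℕ} (hq : q ≠ 0) (i : ℕ) :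
    q ^ i ≡ q ^ (i % 2) [MOD q ^ 2 - 1] := by
  have hsq : q ^ 2 ≡ 1 [MOD q ^ 2 - 1] := Nat.modEq_sub (Nat.one_le_pow _ _ (by omega))
  conv_lhs => rw [← Nat.div_add_mod i 2, pow_add, pow_mul]
  simpa using (hsq.pow (i / 2)).mul_right (q ^ (i % 2))

theorem mul_pow_pow_ne_mul_pow_pow {G : Type*} [CommGroup G] {q n k m : ℕ} (hq : 2 ≤ q)
    (hn : Even n) (hn0 : n ≠ 0) (hk : Odd k) (hm : Odd m) {g u : G}
    (hg : orderOf g = q ^ n - 1) (hu : u ^ (q ^ n - 1) = 1) :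
    (g * u) ^ q ^ m ≠ g * u ^ q ^ k := by
  intro h
  obtain ⟨M, hM⟩ : q ^ 2 - 1 ∣ q ^ n - 1 := by
    obtain ⟨r, rfl⟩ := hn
    simpa [← two_mul, pow_mul] using Nat.sub_dvd_pow_sub_pow (q ^ 2) 1 r
  have hM0 : M ≠ 0 := by
    rintro rfl
    have : 1 < q ^ n := Nat.one_lt_pow hn0 (by omega)
    omega
  have hqm : q ^ m ≡ q [MOD q ^ 2 - 1] := by
    simpa [Nat.odd_iff.mp hm] using Nat.pow_modEq_pow_mod_two (by omega) m
  have hqk : q ^ k ≡ q [MOD q ^ 2 - 1] := by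
    simpa [Nat.odd_iff.mp hk] using Nat.pow_modEq_pow_mod_two (by omega) k
  have hu' : u ^ (q ^ m * M) = u ^ (q ^ k * M) := by
    refine pow_eq_pow_iff_modEq.mpr (Nat.ModEq.of_dvd (orderOf_dvd_of_pow_eq_one hu) ?_)
    rw [hM]
    exact (hqm.trans hqk.symm).mul_right' M
  have hgM : g ^ (q ^ m * M) = g ^ (1 * M) := by
    simpa [mul_pow, ← pow_mul, hu'] using congrArg (· ^ M) h
  rw [pow_eq_pow_iff_modEq, hg, hM] at hgM
  have hq1 := hqm.symm.trans (Nat.ModEq.mul_right_cancel' hM0 hgM)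
  have : 2 * q ≤ q ^ 2 := by nlinarith
  have := hq1.eq_of_lt_of_lt (by omega) (by omega)
  omega

section FrobeniusQuadratic

def frobeniusQuadratic {R : Type*} [CommRing R] (N : ℕ) (a b x : R) : R :=
  x ^ N * x ^ N + a * (x ^ N * x) + b * (x * x)

theorem frobeniusQuadratic_add {R : Type*} [CommRing R] [CharP R 2] {N : ℕ}
    (hN : ∀ x u : R, (x + u) ^ N = x ^ N + u ^ N) (a b x u : R) :
    frobeniusQuadratic N a b (x + u) =
      frobeniusQuadratic N a b x + frobeniusQuadratic N a b u + a * (x ^ N * u + u ^ N * x) := by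
  simp only [frobeniusQuadratic, hN]
  linear_combination (x ^ N * u ^ N + b * x * u) * CharTwo.two_eq_zero (R := R)

variable {F : Type*} [Field F] [Fintype F]

theorem not_bijective_of_trace_polar [Algebra (ZMod 2) F] {Q : F → F} {y : F} (hy : y ≠ 0)
    (c : F → F) (hpolar : ∀ x u, Algebra.trace (ZMod 2) F (y * Q (x + u)) =
      Algebra.trace (ZMod 2) F (y * Q x) + Algebra.trace (ZMod 2) F (y * Q u) +
        Algebra.trace (ZMod 2) F (c u * x))
    (hc : ∀ u ≠ 0, c u ≠ 0) : ¬ Function.Bijective Q := by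
  intro hQ
  let T : F → F →+ ZMod 2 := fun c ↦ (Algebra.traceForm (ZMod 2) F c).toAddMonoidHom
  have hT : ∀ c ≠ 0, T c ≠ 0 := fun c hc h ↦
    hc ((traceForm_nondegenerate (ZMod 2) F).1 c fun x ↦ DFunLike.congr_fun h x)
  have hsq := sq_walshSum_eq_card (fun x ↦ Algebra.trace (ZMod 2) F (y * Q x)) (T ∘ c) hpolar
    fun u hu ↦ hT _ (hc u hu)
  have hzero : walshSum (fun x ↦ Algebra.trace (ZMod 2) F (y * Q x)) = 0 :=
    (walshSum_comp_bijective (T y) hQ).trans (walshSum_eq_zero _ (hT y hy))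
  rw [hzero] at hsq
  have := Fintype.card_pos (α := F)
  omega

theorem not_bijective_frobeniusQuadratic [CharP F 2] {q e n k : ℕ} (hq : q = 2 ^ e)
    (hF : Fintype.card F = q ^ n) (hn : Even n) (hk : Odd k) {a : F} (ha : a ≠ 0) (b : F) :
    ¬ Function.Bijective (frobeniusQuadratic (q ^ k) a b) := by
  let := ZMod.algebra F 2
  have hn0 : n ≠ 0 := by rintro rfl; simpa [hF] using Fintype.one_lt_card (α := F)
  have hq2 : 2 ≤ q := (one_lt_pow_iff_of_nonneg (Nat.zero_le q) hn0).mp (hF ▸ Fintype.one_lt_card)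
  have hq_pow : ∀ j, q ^ j = 2 ^ (e * j) := fun j ↦ by rw [hq, pow_mul]
  obtain ⟨n', rfl⟩ := Nat.exists_eq_add_one_of_ne_zero hn0
  have hm : Odd (n' * k) := Nat.odd_mul.mpr ⟨by simpa [parity_simps] using hn, hk⟩
  have hadj : ∀ z x : F, Algebra.trace (ZMod 2) F (z * x ^ q ^ k) =
      Algebra.trace (ZMod 2) F (z ^ q ^ (n' * k) * x) := fun z x ↦ by
    rw [hq_pow, hq_pow]
    refine trace_mul_pow_char_pow z x ?_
    rw [← mul_add, ← hq_pow, show k + n' * k = (n' + 1) * k by ring, pow_mul, ← hF,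
      FiniteField.pow_card_pow]
  obtain ⟨g, hg⟩ := IsCyclic.exists_generator (α := Fˣ)
  refine not_bijective_of_trace_polar (y := g * a⁻¹) (by simp [ha])
    (fun u ↦ (g * u) ^ q ^ (n' * k) + g * u ^ q ^ k) (fun x u ↦ ?_) (fun u hu h ↦ ?_)
  · have hfrob : ∀ x u : F, (x + u) ^ q ^ k = x ^ q ^ k + u ^ q ^ k := fun x u ↦ by
      rw [hq_pow]; exact add_pow_char_pow ..
    have hpolar : g * a⁻¹ * (a * (x ^ q ^ k * u + u ^ q ^ k * x)) =
        g * u * x ^ q ^ k + g * u ^ q ^ k * x := by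
      field_simp
    rw [frobeniusQuadratic_add hfrob, mul_add, mul_add, hpolar, map_add, map_add, map_add, hadj,
      add_mul, map_add, add_assoc]
  · have hcard : Nat.card Fˣ = q ^ (n' + 1) - 1 := by
      rw [Nat.card_units, Nat.card_eq_fintype_card, hF]
    refine mul_pow_pow_ne_mul_pow_pow hq2 hn hn0 hk hm (u := Units.mk0 u hu)
      (hcard ▸ orderOf_eq_card_of_forall_mem_zpowers hg) (hcard ▸ pow_card_eq_one') (Units.ext ?_)
    simpa using CharTwo.add_eq_zero.mp h

end FrobeniusQuadratic

section QuadraticExtension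

variable {F E : Type*} [Field F] [Field E] [Algebra F E] [Finite E]

theorem mem_range_algebraMap_of_pow_card_eq_self {x : E} (hx : x ^ Nat.card F = x) :
    x ∈ Set.range (algebraMap F E) := by
  have := Finite.of_injective _ (algebraMap F E).injective
  have := Fintype.ofFinite F
  refine (IsGalois.mem_range_algebraMap_iff_fixed x).mpr fun σ ↦ ?_
  obtain ⟨i, rfl⟩ := (FiniteField.bijective_frobeniusAlgEquivOfAlgebraic_pow F E).2 σ
  rw [AlgEquiv.coe_pow, FiniteField.coe_frobeniusAlgEquivOfAlgebraic]
  exact Function.iterate_fixed (by rwa [← Nat.card_eq_fintype_card]) _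

variable (h2 : Module.finrank F E = 2)
include h2

theorem algebraMap_trace_eq_add_pow_card (x : E) :
    algebraMap F E (Algebra.trace F E x) = x + x ^ Nat.card F := by
  simp [FiniteField.algebraMap_trace_eq_sum_pow, h2, sum_range_succ]

theorem algebraMap_norm_eq_mul_pow_card (x : E) :
    algebraMap F E (Algebra.norm F x) = x * x ^ Nat.card F := by
  simp [FiniteField.algebraMap_norm_eq_prod_pow, h2, prod_range_succ]

theorem trace_ne_zero_of_notMem_range [CharP E 2] {δ : E}
    (hδ : δ ∉ Set.range (algebraMap F E)) : Algebra.trace F E δ ≠ 0 := by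
  intro h
  have := algebraMap_trace_eq_add_pow_card h2 δ
  rw [h, map_zero, eq_comm, CharTwo.add_eq_zero] at this
  exact hδ (mem_range_algebraMap_of_pow_card_eq_self this.symm)

end QuadraticExtension

theorem not_perm_monomial_case_general (q n k : ℕ) (hq : Even q)
    (hn : Even n) (hn' : 2 ≤ n) (hk : Nat.gcd n k = 1)
    (K Lf E : Type) [Field K] [Fintype K] [Field Lf] [Field E]
    [Algebra K Lf] [Algebra Lf E]
    (hcard : Fintype.card K = q)
    (hdim : Module.finrank K Lf = n) (hdim2 : Module.finrank Lf E = 2)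
    (δ : E) (hδ : δ ∉ Set.range (algebraMap Lf E))
    (Q : Lf → Lf)
    (hQ : ∀ x, algebraMap Lf E (Q x) =
      ((algebraMap Lf E x) ^ (q ^ k) + δ * algebraMap Lf E x) *
      ((algebraMap Lf E x) ^ (q ^ k) + δ ^ (q ^ n) * algebraMap Lf E x)) :
    ¬ Function.Bijective Q := by
  obtain ⟨hK, e, rfl⟩ : CharP K 2 ∧ ∃ e : ℕ, q = 2 ^ e := by
    have hK : CharP K 2 := ringChar.eq_iff.mp
      (FiniteField.even_card_iff_char_two.mpr (hcard ▸ Nat.even_iff.mp hq))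
    obtain ⟨e, -, he⟩ := FiniteField.card K 2
    exact ⟨hK, e, hcard ▸ he⟩
  have : FiniteDimensional K Lf := .of_finrank_pos (by omega)
  have : Finite Lf := Module.finite_of_finite K
  have : FiniteDimensional Lf E := .of_finrank_pos (by omega)
  have : Finite E := Module.finite_of_finite Lf
  let := Fintype.ofFinite Lf
  have : CharP Lf 2 := charP_of_injective_algebraMap (algebraMap K Lf).injective 2
  have : CharP E 2 := charP_of_injective_algebraMap (algebraMap Lf E).injective 2
  have hLf : Fintype.card Lf = (2 ^ e) ^ n := by
    rw [Module.card_eq_pow_finrank (K := K), hcard, hdim]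
  have hQ' : Q = frobeniusQuadratic ((2 ^ e) ^ k) (Algebra.trace Lf E δ) (Algebra.norm Lf δ) :=
    funext fun x ↦ (algebraMap Lf E).injective <| by
      simp only [hQ, frobeniusQuadratic, map_add, map_mul, map_pow,
        algebraMap_trace_eq_add_pow_card hdim2, algebraMap_norm_eq_mul_pow_card hdim2,
        Nat.card_eq_fintype_card, hLf]
      ring
  rw [hQ']
  exact not_bijective_frobeniusQuadratic rfl hLf hn
    (Nat.Coprime.coprime_dvd_left (even_iff_two_dvd.mp hn) hk).odd_of_left
    (trace_ne_zero_of_notMem_range hdim2 hδ) _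

/-- **Example 1.** For `q` even and `n` even, with
`L(x) = x^{q^k}`, `gcd(n,k) = 1`, the norm-type map
`Q(x) = (x^{q^k}+δx)(x^{q^k}+δ^{qⁿ}x)` is not a permutation of `F_{qⁿ}`. -/
theorem not_perm_monomial_case (q n k : ℕ) (hq : Even q) (hq' : IsPrimePow q)
    (hn : Even n) (hn' : 2 ≤ n) (hk : Nat.gcd n k = 1)
    (K Lf E : Type) [Field K] [Fintype K] [Field Lf] [Field E]
    [Algebra K Lf] [Algebra Lf E] [Algebra K E] [IsScalarTower K Lf E]
    (hcard : Fintype.card K = q)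
    (hdim : Module.finrank K Lf = n) (hdim2 : Module.finrank Lf E = 2)
    (δ : E) (hδ : δ ∉ Set.range (algebraMap Lf E))
    (Q : Lf → Lf)
    (hQ : ∀ x, algebraMap Lf E (Q x) =
      ((algebraMap Lf E x) ^ (q ^ k) + δ * algebraMap Lf E x) *
      ((algebraMap Lf E x) ^ (q ^ k) + δ ^ (q ^ n) * algebraMap Lf E x)) :
    ¬ Function.Bijective Q :=
  not_perm_monomial_case_general q n k hq hn hn' hk K Lf E hcard hdim hdim2 δ hδ Q hQ
end

section
/- Let q be even and n even, n ≥ 2. Let δ ∈ F_{q^{2n}} \ F_{q^n} and set L(x) = Tr_{F_{q^n}/F_q}(x) and Q(x) = (L(x) + δx)(L(x) + δ^{q^n}x). Then Q is not a permutation of F_{q^n}. -/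
open Polynomial

/-- **Example 2.** For `q` even and `n` even, with
`L(x) = Tr_{F_{qⁿ}/F_q}(x)`, the norm-type map
`Q(x) = (L(x)+δx)(L(x)+δ^{qⁿ}x)` is not a permutation of `F_{qⁿ}`. -/
theorem not_perm_trace_case (q n : ℕ) (hq : Even q) (hq' : IsPrimePow q)
    (hn : Even n) (hn' : 2 ≤ n)
    (K Lf E : Type) [Field K] [Fintype K] [Field Lf] [Field E]
    [Algebra K Lf] [Algebra Lf E] [Algebra K E] [IsScalarTower K Lf E]
    (hcard : Fintype.card K = q)
    (hdim : Module.finrank K Lf = n) (hdim2 : Module.finrank Lf E = 2)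
    (δ : E) (hδ : δ ∉ Set.range (algebraMap Lf E))
    (Q : Lf → Lf)
    (hQ : ∀ x, algebraMap Lf E (Q x) =
      (algebraMap K E (Algebra.trace K Lf x) + δ * algebraMap Lf E x) *
      (algebraMap K E (Algebra.trace K Lf x) + δ ^ (q ^ n) * algebraMap Lf E x)) :
    ¬ Function.Bijective Q := by
  intro hbij
  classical
  -- q is a power of 2
  obtain ⟨p0, k, hp0, hk, hqpk⟩ := hq'
  have hp02 : p0 = 2 := by
    have h2 : (2 : ℕ) ∣ p0 ^ k := hqpk ▸ hq.two_dvd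
    have h2' := Nat.Prime.dvd_of_dvd_pow Nat.prime_two h2
    exact ((Nat.prime_dvd_prime_iff_eq Nat.prime_two hp0.nat_prime).mp h2').symm
  have hq2 : 2 ≤ q := by
    calc 2 = 2 ^ 1 := by norm_num
    _ ≤ 2 ^ k := Nat.pow_le_pow_right (by norm_num) hk
    _ = q := by rw [← hp02, hqpk]
  -- characteristic 2
  haveI : CharP K (ringChar K) := ringChar.charP K
  have hchar2 : ringChar K = 2 := by
    obtain ⟨m', hpr, hcard'⟩ := FiniteField.card K (ringChar K)
    have h2 : (2 : ℕ) ∣ ringChar K ^ (m' : ℕ) := by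
      rw [← hcard', hcard]; exact hq.two_dvd
    have h2' := Nat.Prime.dvd_of_dvd_pow Nat.prime_two h2
    exact ((Nat.prime_dvd_prime_iff_eq Nat.prime_two hpr).mp h2').symm
  haveI hK2 : CharP K 2 := hchar2 ▸ ringChar.charP K
  haveI hL2 : CharP Lf 2 := charP_of_injective_algebraMap (algebraMap K Lf).injective 2
  haveI hE2 : CharP E 2 := charP_of_injective_algebraMap (algebraMap K E).injective 2
  haveI : Fact (Nat.Prime 2) := ⟨Nat.prime_two⟩
  -- finiteness
  haveI : FiniteDimensional K Lf := Module.finite_of_finrank_pos (by rw [hdim]; omega)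
  haveI : FiniteDimensional Lf E := Module.finite_of_finrank_pos (by rw [hdim2]; omega)
  haveI : Finite Lf := Module.finite_of_finite K
  letI : Fintype Lf := Fintype.ofFinite Lf
  haveI : Finite E := Module.finite_of_finite Lf
  letI : Fintype E := Fintype.ofFinite E
  have hcardL : Fintype.card Lf = q ^ n := by
    rw [Module.card_eq_pow_finrank (K := K), hcard, hdim]
  have hcardE : Fintype.card E = (q ^ n) ^ 2 := by
    rw [Module.card_eq_pow_finrank (K := Lf), hcardL, hdim2]
  set m := q ^ n with hm
  have hm2exp : m = 2 ^ (k * n) := by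
    rw [hm, ← hqpk, hp02, pow_mul]
  have hm2 : 2 ≤ m := by
    calc 2 ≤ q := hq2
    _ = q ^ 1 := (pow_one q).symm
    _ ≤ q ^ n := Nat.pow_le_pow_right (by omega) (by omega)
  have hι : Function.Injective (algebraMap Lf E) := (algebraMap Lf E).injective
  have hιK : Function.Injective (algebraMap K Lf) := (algebraMap K Lf).injective
  -- fixed points of z ↦ z^m in E are exactly the image of Lf
  have hfix : ∀ z : E, z ^ m = z ↔ z ∈ Set.range (algebraMap Lf E) := by
    have hP : (X ^ m - X : E[X]).natDegree = m := by
      rw [natDegree_sub_eq_left_of_natDegree_lt, natDegree_X_pow]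
      rw [natDegree_X, natDegree_X_pow]; omega
    have hPne : (X ^ m - X : E[X]) ≠ 0 := by
      intro h
      rw [h, natDegree_zero] at hP; omega
    set RF : Finset E := Finset.univ.image (algebraMap Lf E) with hRF
    have hsub : RF ⊆ (X ^ m - X : E[X]).roots.toFinset := by
      intro z hz
      rw [hRF, Finset.mem_image] at hz
      obtain ⟨a, -, rfl⟩ := hz
      rw [Multiset.mem_toFinset, mem_roots hPne]
      simp only [IsRoot, eval_sub, eval_pow, eval_X]
      rw [← map_pow, ← hcardL, FiniteField.pow_card, sub_self]
    have hcards : (X ^ m - X : E[X]).roots.toFinset.card ≤ RF.card := by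
      have h1 : (X ^ m - X : E[X]).roots.toFinset.card ≤ m := by
        calc (X ^ m - X : E[X]).roots.toFinset.card
            ≤ Multiset.card (X ^ m - X : E[X]).roots := Multiset.toFinset_card_le _
          _ ≤ (X ^ m - X : E[X]).natDegree := card_roots' _
          _ = m := hP
      have h2 : RF.card = m := by
        rw [hRF, Finset.card_image_of_injective _ hι, Finset.card_univ, hcardL]
      omega
    have heq : RF = (X ^ m - X : E[X]).roots.toFinset :=
      Finset.eq_of_subset_of_card_le hsub hcards
    intro z
    constructor
    · intro h
      have hz : z ∈ (X ^ m - X : E[X]).roots.toFinset := by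
        rw [Multiset.mem_toFinset, mem_roots hPne]
        simp only [IsRoot, eval_sub, eval_pow, eval_X]
        rw [h, sub_self]
      rw [← heq, hRF, Finset.mem_image] at hz
      obtain ⟨a, -, rfl⟩ := hz
      exact ⟨a, rfl⟩
    · rintro ⟨a, rfl⟩
      rw [← map_pow, ← hcardL, FiniteField.pow_card]
  have hδm : δ ^ m ≠ δ := fun h => hδ ((hfix δ).mp h)
  have hδ0 : δ ≠ 0 := fun h => hδ ⟨0, by rw [map_zero, h]⟩
  have hEfix : (δ ^ m) ^ m = δ := by
    rw [← pow_mul, show m * m = Fintype.card E from by rw [hcardE]; ring]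
    exact FiniteField.pow_card δ
  have hfrobE : ∀ x y : E, (x + y) ^ m = x ^ m + y ^ m := by
    intro x y
    rw [hm2exp]
    exact add_pow_char_pow x y 2 (k * n)
  obtain ⟨b, hb⟩ : δ + δ ^ m ∈ Set.range (algebraMap Lf E) :=
    (hfix _).mp (by rw [hfrobE, hEfix, add_comm])
  obtain ⟨c, hc⟩ : δ * δ ^ m ∈ Set.range (algebraMap Lf E) :=
    (hfix _).mp (by rw [mul_pow, hEfix, mul_comm])
  have hb0 : b ≠ 0 := by
    intro h
    apply hδm
    rw [h, map_zero] at hb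
    have : δ ^ m = -δ := eq_neg_of_add_eq_zero_right hb.symm
    rw [this, CharTwo.neg_eq]
  have hc0 : c ≠ 0 := by
    intro h
    rw [h, map_zero] at hc
    exact mul_ne_zero hδ0 (pow_ne_zero _ hδ0) hc.symm
  set T := Algebra.trace K Lf with hTdef
  -- formula for Q over Lf
  have hQL : ∀ x : Lf,
      Q x = algebraMap K Lf (T x) ^ 2 + b * (algebraMap K Lf (T x)) * x + c * x ^ 2 := by
    intro x
    apply hι
    rw [hQ x, IsScalarTower.algebraMap_apply K Lf E]
    simp only [map_add, map_mul, map_pow, hb, hc]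
    ring
  -- trace facts
  haveI : Algebra.IsSeparable K Lf := inferInstance
  have hTsurj := Algebra.trace_surjective K Lf
  obtain ⟨u, hu⟩ := hTsurj 1
  have h2K : (2 : K) = 0 := CharTwo.two_eq_zero
  have h2L : (2 : Lf) = 0 := CharTwo.two_eq_zero
  have hnd : ∀ a : Lf, (∀ x, T (a * x) = 0) → a = 0 := by
    intro a ha
    by_contra h
    have h1 := ha (a⁻¹ * u)
    rw [← mul_assoc, mul_inv_cancel₀ h, one_mul, hu] at h1
    exact one_ne_zero h1
  have htr2 : ∀ x : Lf, T (x ^ 2) = (T x) ^ 2 := by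
    intro x
    apply (algebraMap K (AlgebraicClosure K)).injective
    haveI : CharP (AlgebraicClosure K) 2 :=
      charP_of_injective_algebraMap (algebraMap K (AlgebraicClosure K)).injective 2
    rw [hTdef, map_pow (algebraMap K (AlgebraicClosure K)), trace_eq_sum_embeddings (E := AlgebraicClosure K),
      trace_eq_sum_embeddings (E := AlgebraicClosure K), CharTwo.sum_sq]
    exact Finset.sum_congr rfl fun σ _ => map_pow σ x 2
  have htralg : ∀ e : K, T (algebraMap K Lf e) = 0 := by
    intro e
    rw [hTdef, Algebra.trace_algebraMap, hdim]
    obtain ⟨j, hj⟩ := hn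
    rw [hj, add_smul, CharTwo.add_self_eq_zero]
  have htsmul : ∀ (e : K) (x : Lf), T (algebraMap K Lf e * x) = e * T x := by
    intro e x
    rw [← Algebra.smul_def, map_smul, smul_eq_mul]
  -- the key collision criterion
  have hkey : ∀ x s : Lf,
      algebraMap K Lf (T s) ^ 2 +
        b * (algebraMap K Lf (T x) * s + algebraMap K Lf (T s) * x
          + algebraMap K Lf (T s) * s) + c * s ^ 2 = 0 →
      Q (x + s) = Q x := by
    intro x s h
    have hTxs : algebraMap K Lf (T (x + s))
        = algebraMap K Lf (T x) + algebraMap K Lf (T s) := by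
      rw [map_add T, map_add]
    rw [hQL (x + s), hQL x, hTxs]
    rw [← sub_eq_zero]
    linear_combination h + (algebraMap K Lf (T x) * algebraMap K Lf (T s)
      + c * x * s) * h2L
  by_cases hcb : ∃ e : K, c = b * algebraMap K Lf e
  · -- case A : c/b ∈ K
    obtain ⟨e, he⟩ := hcb
    have he0 : e ≠ 0 := by
      intro h0
      exact hc0 (by rw [he, h0, map_zero, mul_zero])
    set s := algebraMap K Lf e⁻¹ with hs
    have hs0 : s ≠ 0 := by
      intro h0
      exact inv_ne_zero he0 (hιK (by rw [← hs, h0, map_zero]))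
    have hcs : c * s ^ 2 = b * s := by
      have he2 : e * (e⁻¹) ^ 2 = e⁻¹ := by
        rw [sq, ← mul_assoc, mul_inv_cancel₀ he0, one_mul]
      calc c * s ^ 2 = b * (algebraMap K Lf (e * (e⁻¹) ^ 2)) := by
            rw [he, hs, map_mul, map_pow]; ring
        _ = b * s := by rw [he2]
    have heq0 : algebraMap K Lf (T s) ^ 2 +
        b * (algebraMap K Lf (T u) * s + algebraMap K Lf (T s) * u
          + algebraMap K Lf (T s) * s) + c * s ^ 2 = 0 := by
      rw [show T s = 0 from htralg e⁻¹, hu, map_zero, map_one]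
      linear_combination hcs + (b * s) * h2L
    have hcol := hkey u s heq0
    have := hbij.injective hcol
    exact hs0 (add_eq_left.mp this)
  · -- case B : c/b ∉ K
    push_neg at hcb
    set d := b⁻¹ * c with hd
    have hbd : b * d = c := by
      rw [hd, ← mul_assoc, mul_inv_cancel₀ hb0, one_mul]
    have hdK : ∀ e : K, d ≠ algebraMap K Lf e := by
      intro e h
      exact hcb e (by rw [← hbd, h])
    by_cases hex : ∃ z, T z = 0 ∧ T (d * z) ≠ 0
    · obtain ⟨z, hz0, hz1⟩ := hex
      set w := T b⁻¹ + 1 with hw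
      set κ := (w + T (d * u)) * (T (d * z))⁻¹ with hκ
      set v := u + algebraMap K Lf κ * z with hv
      have hv1 : T v = 1 := by
        rw [hv, map_add, htsmul, hz0, mul_zero, add_zero, hu]
      have hv2 : T (d * v) = w := by
        rw [hv, mul_add, map_add, mul_left_comm d (algebraMap K Lf κ) z, htsmul, hκ]
        rw [mul_assoc _ (T (d * z))⁻¹ (T (d * z)), inv_mul_cancel₀ hz1, mul_one]
        linear_combination (T (d * u)) * h2K
      have hsqinj : Function.Injective (fun z : Lf => z ^ 2) := by
        intro a a' hab
        simp only at hab
        have h0 : (a + a') ^ 2 = 0 := by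
          rw [CharTwo.add_sq, hab, CharTwo.add_self_eq_zero]
        have h1 : a + a' = 0 := by
          exact pow_eq_zero_iff (by norm_num) |>.mp h0
        rw [← CharTwo.sub_eq_add, sub_eq_zero] at h1
        exact h1
      obtain ⟨s, hs⟩ := Finite.surjective_of_injective hsqinj v
      simp only at hs
      have hTs : T s = 1 := by
        have h1 : (T s) ^ 2 = 1 := by rw [← htr2, hs, hv1]
        have h0 : (T s + 1) ^ 2 = 0 := by
          rw [CharTwo.add_sq, h1, one_pow, CharTwo.add_self_eq_zero]
        have h2 : T s + 1 = 0 := pow_eq_zero_iff (by norm_num) |>.mp h0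
        rw [← CharTwo.sub_eq_add, sub_eq_zero] at h2
        exact h2
      set x := s + b⁻¹ + d * s ^ 2 with hx
      have hTx : T x = 0 := by
        rw [hx, map_add, map_add, hTs, hs, hv2, hw]
        linear_combination (1 + T b⁻¹) * h2K
      have heq0 : algebraMap K Lf (T s) ^ 2 +
          b * (algebraMap K Lf (T x) * s + algebraMap K Lf (T s) * x
            + algebraMap K Lf (T s) * s) + c * s ^ 2 = 0 := by
        rw [hTs, hTx, map_zero, map_one, hx]
        have hbb : b * b⁻¹ = 1 := mul_inv_cancel₀ hb0
        linear_combination hbb + s ^ 2 * hbd + (b * s + c * s ^ 2 + 1) * h2L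
      have hcol := hkey x s heq0
      have hxx := hbij.injective hcol
      have hs0 : s ≠ 0 := by
        intro h0
        rw [h0, map_zero] at hTs
        exact zero_ne_one hTs
      exact hs0 (add_eq_left.mp hxx)
    · push_neg at hex
      set ρ := T (d * u) with hρ
      have hall : ∀ y, T ((d - algebraMap K Lf ρ) * y) = 0 := by
        intro y
        have h1 : T (y + T y • u) = 0 := by
          rw [map_add, map_smul, smul_eq_mul, hu, mul_one, CharTwo.add_self_eq_zero]
        have h2 := hex _ h1
        rw [mul_add, map_add, mul_smul_comm, map_smul, smul_eq_mul] at h2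
        rw [sub_mul, map_sub, htsmul]
        linear_combination h2 - (T y * ρ) * h2K
      have hd0 := hnd _ hall
      rw [sub_eq_zero] at hd0
      exact hdK ρ hd0
end

section
/- Let q = 2^e be even and δ ∈ F_{q^6} \ F_{q^3}. Then the map x ↦ (x^q + δx)^{1+q^3} is NOT a permutation of F_{q^3}. -/
/-!
If `Q` permuted `𝔽_{q³}`, Hermite's criterion would force `∑ₓ Q(x)^(q²-1) = 0`. Over `𝔽_{q⁶}`,
`Q(x) = (x^q + δx)(x^q + δ'x)` with `δ' = δ^(q³)`. In characteristic two both factors expand with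
all binomial coefficients equal to one, and the power sums over `𝔽_{q³}` keep a single coefficient,
`(δδ')^q ∑_{i+j=q²-q-1} δ'^i δ^j`; times `δ' - δ ≠ 0` this is `(δδ')^q (δ'^(q²-q) - δ^(q²-q))`.
So `λ = δ'/δ` satisfies `λ^(q(q-1)) = 1`, hence `λ^q = λ`; but `λ^(q³) = λ⁻¹`, so `λ² = 1`,
`λ = 1`, and `δ = δ^(q³)` lies in `𝔽_{q³}`.
-/

open Finset

lemma geom_sum₂_two_mul {R : Type*} [CommSemiring R] (x y : R) (n : ℕ) :
    ∑ i ∈ range (2 * n), x ^ i * y ^ (2 * n - 1 - i) =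
      (x ^ n + y ^ n) * ∑ i ∈ range n, x ^ i * y ^ (n - 1 - i) := by
  rw [two_mul, sum_range_add, add_mul, mul_sum, mul_sum, add_comm]
  congr 1 <;> refine sum_congr rfl fun i hi => ?_ <;> have := mem_range.1 hi
  · rw [show n + n - 1 - (n + i) = n - 1 - i by omega, pow_add]; ring
  · rw [show n + n - 1 - i = n + (n - 1 - i) by omega, pow_add]; ring

lemma CharTwo.add_pow_two_pow_sub_one {R : Type*} [CommSemiring R] [CharP R 2] (x y : R)
    (k : ℕ) : (x + y) ^ (2 ^ k - 1) = ∑ i ∈ range (2 ^ k), x ^ i * y ^ (2 ^ k - 1 - i) := by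
  induction k with
  | zero => simp
  | succ k ih =>
    rw [pow_succ', geom_sum₂_two_mul, ← ih, ← add_pow_char_pow, ← pow_add]
    congr 1
    have := Nat.one_le_two_pow (n := k)
    omega

lemma FiniteField.sum_pow_of_ne_zero (K : Type*) [Field K] [Fintype K] {i : ℕ} (hi : i ≠ 0) :
    ∑ x : K, x ^ i = if Fintype.card K - 1 ∣ i then -1 else 0 := by
  classical
  rw [← FiniteField.sum_pow_units, ← Fintype.sum_subtype_add_sum_subtype (· ≠ (0 : K)),
    ← Fintype.sum_equiv unitsEquivNeZero (fun x : Kˣ ↦ (x : K) ^ i) _ fun _ ↦ rfl, add_eq_left]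
  exact sum_eq_zero fun x _ ↦ by rw [not_not.1 x.2, zero_pow hi]

lemma FiniteField.sum_pow_comp_eq_zero_of_bijective {K : Type*} [Field K] [Fintype K]
    {f : K → K} (hf : Function.Bijective f) {i : ℕ} (hi : i < Fintype.card K - 1) :
    ∑ x, f x ^ i = 0 := by
  rw [Fintype.sum_bijective f hf _ (· ^ i) fun _ ↦ rfl]
  exact FiniteField.sum_pow_lt_card_sub_one K i hi

lemma pow_three_sub_one_dvd_sub_one_mul_iff {q k : ℕ} (hq : 2 ≤ q) (hk : k < 2 * q ^ 2) :
    q ^ 3 - 1 ∣ (q - 1) * (k + 2 * q + 2) ↔ k = q ^ 2 - q - 1 := by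
  have hq2 : 2 * q ≤ q ^ 2 := by nlinarith
  have hfac : q ^ 3 - 1 = (q - 1) * (q ^ 2 + q + 1) := by
    zify [Nat.one_le_pow 3 q (by omega), (by omega : 1 ≤ q)]; ring
  rw [hfac, Nat.mul_dvd_mul_iff_left (by omega)]
  constructor
  · intro h
    have := Nat.eq_of_dvd_of_lt_two_mul (by omega) h (by omega)
    omega
  · intro h
    exact ⟨1, by omega⟩

lemma sum_pow_sub_one_mul {F : Type*} [Field F] [Fintype F] {q k : ℕ}
    (hF : Fintype.card F = q ^ 3) (hq : 2 ≤ q) (hk : k < 2 * q ^ 2) :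
    ∑ x : F, x ^ ((q - 1) * (k + 2 * q + 2)) = if k = q ^ 2 - q - 1 then -1 else 0 := by
  rw [FiniteField.sum_pow_of_ne_zero F (Nat.mul_ne_zero (by omega) (by omega)), hF]
  simp only [pow_three_sub_one_dvd_sub_one_mul_iff hq hk]

lemma add_mul_pow_sq_sub_one {E : Type*} [CommRing E] [CharP E 2] {q e : ℕ} (hq : q = 2 ^ e)
    (γ y : E) : (y ^ q + γ * y) ^ (q ^ 2 - 1) =
      ∑ i ∈ range (q ^ 2), γ ^ (q ^ 2 - 1 - i) * y ^ ((q - 1) * (i + q + 1)) := by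
  have hq2 : q ^ 2 = 2 ^ (2 * e) := by rw [hq, ← pow_mul, mul_comm]
  have hq1 : 1 ≤ q := hq ▸ Nat.one_le_two_pow
  rw [hq2, CharTwo.add_pow_two_pow_sub_one, ← hq2]
  refine sum_congr rfl fun i hi ↦ ?_
  have hi := mem_range.1 hi
  have : q * i + (q ^ 2 - 1 - i) = (q - 1) * (i + q + 1) := by
    zify [hq1, (by omega : i ≤ q ^ 2 - 1), (by omega : 1 ≤ q ^ 2)]; ring
  rw [← this, pow_add, pow_mul, mul_pow]; ring

lemma sum_range_sum_range_ite_add_eq {M : Type*} [AddCommMonoid M] {m N : ℕ} (hm : m < N)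
    (f : ℕ → ℕ → M) :
    ∑ i ∈ range N, ∑ j ∈ range N, (if i + j = m then f i j else 0) =
      ∑ i ∈ range (m + 1), f i (m - i) := by
  rw [← Nat.sum_antidiagonal_eq_sum_range_succ, ← sum_product', ← sum_filter]
  congr 1
  ext ⟨i, j⟩
  simp only [mem_filter, mem_product, mem_range, HasAntidiagonal.mem_antidiagonal]
  omega

lemma add_mul_pow_one_add_char_pow {E : Type*} [CommRing E] {p : ℕ} [Fact p.Prime] [CharP E p]
    {N k m : ℕ} (hN : N = p ^ k) {y : E} (hy : y ^ N = y) (δ : E) :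
    (y ^ m + δ * y) ^ (1 + N) = (y ^ m + δ * y) * (y ^ m + δ ^ N * y) := by
  subst hN
  rw [pow_add, pow_one, add_pow_char_pow, mul_pow, hy, pow_right_comm, hy]

open Polynomial in
lemma mem_range_algebraMap_of_pow_card_eq_self_s13 {F E : Type*} [Field F] [Fintype F] [Field E]
    [Algebra F E] {y : E} (hy : y ^ Fintype.card F = y) : y ∈ Set.range (algebraMap F E) := by
  have hroots : (X ^ Fintype.card F - X : F[X]).roots.map (algebraMap F E) =
      ((X ^ Fintype.card F - X : F[X]).map (algebraMap F E)).roots := by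
    refine roots_map_of_injective_of_card_eq_natDegree (algebraMap F E).injective ?_
    rw [FiniteField.roots_X_pow_card_sub_X,
      FiniteField.X_pow_card_sub_X_natDegree_eq F Fintype.one_lt_card]
    rfl
  have : y ∈ ((X ^ Fintype.card F - X : F[X]).map (algebraMap F E)).roots := by
    rw [mem_roots (map_ne_zero (FiniteField.X_pow_card_sub_X_ne_zero F Fintype.one_lt_card))]
    simp [hy]
  rw [← hroots] at this
  obtain ⟨x, -, rfl⟩ := Multiset.mem_map.1 this
  exact ⟨x, rfl⟩

lemma CharTwo.eq_of_pow_eq_of_pow_cube_eq {E : Type*} [Field E] [CharP E 2] {q e : ℕ}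
    (hq : q = 2 ^ e) {a b : E} (ha : a ≠ 0) (hab : a ^ q ^ 3 = b) (hba : b ^ q ^ 3 = a)
    (h : b ^ (q ^ 2 - q) = a ^ (q ^ 2 - q)) : a = b := by
  have hq1 : 1 ≤ q := hq ▸ Nat.one_le_two_pow
  set l := b / a
  have hl1 : l ^ (q - 1) = 1 := by
    rw [← ExpChar.pow_prime_pow_mul_eq_one_iff 2 e, ← hq,
      show q * (q - 1) = q ^ 2 - q by rw [Nat.mul_sub_one, sq], div_pow, h,
      div_self (pow_ne_zero _ ha)]
  have hlq : l ^ q = l := by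
    rw [← Nat.sub_add_cancel hq1, pow_succ, hl1, one_mul]
  have hlinv : l = l⁻¹ := by
    calc l = l ^ q ^ 3 := by rw [show q ^ 3 = q * q * q by ring, pow_mul, pow_mul, hlq, hlq, hlq]
      _ = l⁻¹ := by rw [div_pow, hab, hba, inv_div]
  have hl2 : l ^ (2 ^ 1 * 1) = 1 := by
    rw [mul_one, pow_one, sq]
    nth_rewrite 2 [hlinv]
    exact mul_inv_cancel₀ (div_ne_zero (hab ▸ pow_ne_zero _ ha) ha)
  rw [ExpChar.pow_prime_pow_mul_eq_one_iff, pow_one, div_eq_one_iff_eq ha] at hl2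
  exact hl2.symm

lemma sum_pow_sq_sub_one_mul_sub {F E : Type*} [Field F] [Fintype F] [CommRing E] [CharP E 2]
    [Algebra F E] {q e : ℕ} (hq : q = 2 ^ e) (hF : Fintype.card F = q ^ 3) (γ γ' : E) :
    (∑ x : F, ((algebraMap F E x ^ q + γ * algebraMap F E x) *
        (algebraMap F E x ^ q + γ' * algebraMap F E x)) ^ (q ^ 2 - 1)) * (γ' - γ) =
      (γ * γ') ^ q * (γ' ^ (q ^ 2 - q) - γ ^ (q ^ 2 - q)) := by
  have hq2 : 2 ≤ q := (Nat.one_lt_pow_iff (by norm_num)).1 (hF ▸ Fintype.one_lt_card)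
  have hqq : 2 * q ≤ q ^ 2 := by nlinarith
  set A := algebraMap F E
  have hexpand : ∀ x : F, ((A x ^ q + γ * A x) * (A x ^ q + γ' * A x)) ^ (q ^ 2 - 1) =
      ∑ i ∈ range (q ^ 2), ∑ j ∈ range (q ^ 2), γ ^ (q ^ 2 - 1 - i) * γ' ^ (q ^ 2 - 1 - j) *
        A (x ^ ((q - 1) * (i + j + 2 * q + 2))) := by
    intro x
    rw [mul_pow, add_mul_pow_sq_sub_one hq, add_mul_pow_sq_sub_one hq, sum_mul_sum]
    refine sum_congr rfl fun i _ ↦ sum_congr rfl fun j _ ↦ ?_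
    rw [map_pow, show (q - 1) * (i + j + 2 * q + 2) = (q - 1) * (i + q + 1) + (q - 1) * (j + q + 1)
      by ring, pow_add]
    ring
  calc
    _ = (∑ i ∈ range (q ^ 2), ∑ j ∈ range (q ^ 2), γ ^ (q ^ 2 - 1 - i) * γ' ^ (q ^ 2 - 1 - j) *
        A (∑ x : F, x ^ ((q - 1) * (i + j + 2 * q + 2)))) * (γ' - γ) := by
      simp_rw [hexpand, map_sum, mul_sum]
      rw [sum_comm]
      exact congrArg (· * _) (sum_congr rfl fun i _ ↦ sum_comm)
    _ = (∑ i ∈ range (q ^ 2), ∑ j ∈ range (q ^ 2),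
        if i + j = q ^ 2 - q - 1 then γ ^ (q ^ 2 - 1 - i) * γ' ^ (q ^ 2 - 1 - j) else 0) *
          (γ' - γ) := by
      refine congrArg (· * _) (sum_congr rfl fun i hi ↦ sum_congr rfl fun j hj ↦ ?_)
      rw [sum_pow_sub_one_mul hF hq2 (by simp only [mem_range] at hi hj; omega)]
      split_ifs <;> simp [CharTwo.neg_eq]
    _ = (∑ i ∈ range (q ^ 2 - q - 1 + 1),
        γ ^ (q ^ 2 - 1 - i) * γ' ^ (q ^ 2 - 1 - (q ^ 2 - q - 1 - i))) * (γ' - γ) := by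
      rw [sum_range_sum_range_ite_add_eq (by omega)]
    _ = (γ * γ') ^ q *
        ((∑ i ∈ range (q ^ 2 - q), γ' ^ i * γ ^ (q ^ 2 - q - 1 - i)) * (γ' - γ)) := by
      rw [show q ^ 2 - q - 1 + 1 = q ^ 2 - q by omega, ← mul_assoc, mul_sum]
      congr 1
      refine sum_congr rfl fun i hi ↦ ?_
      have hi := mem_range.1 hi
      rw [show q ^ 2 - 1 - i = q + (q ^ 2 - q - 1 - i) by omega,
        show q ^ 2 - 1 - (q ^ 2 - q - 1 - i) = q + i by omega, pow_add, pow_add, mul_pow]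
      ring
    _ = _ := by rw [geom_sum₂_mul]

theorem frob_norm_not_perm_general (q e : ℕ) (hq : q = 2 ^ e)
    (K L3 E : Type) [Field K] [Fintype K] [Field L3] [Field E]
    [Algebra K L3] [Algebra L3 E]
    (hcard : Fintype.card K = q)
    (hdim : Module.finrank K L3 = 3) (hdim2 : Module.finrank L3 E = 2)
    (δ : E) (hδ : δ ∉ Set.range (algebraMap L3 E))
    (Q : L3 → L3)
    (hQ : ∀ x, algebraMap L3 E (Q x) =
      ((algebraMap L3 E x) ^ q + δ * algebraMap L3 E x) ^ (1 + q ^ 3)) :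
    ¬ Function.Bijective Q := by
  intro hbij
  have hq2 : 2 ≤ q := hcard ▸ Fintype.one_lt_card
  have : CharP K 2 := charP_of_card_eq_prime_pow (hcard.trans hq)
  have : CharP L3 2 := charP_of_injective_algebraMap (algebraMap K L3).injective 2
  have : CharP E 2 := charP_of_injective_algebraMap (algebraMap L3 E).injective 2
  have : Module.Finite K L3 := Module.finite_of_finrank_eq_succ hdim
  have : Module.Finite L3 E := Module.finite_of_finrank_eq_succ hdim2
  have : Fintype L3 := @Fintype.ofFinite _ (Module.finite_of_finite K)
  have : Fintype E := @Fintype.ofFinite _ (Module.finite_of_finite L3)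
  have hL3 : Fintype.card L3 = q ^ 3 := by rw [Module.card_eq_pow_finrank (K := K), hcard, hdim]
  have hE : Fintype.card E = (q ^ 3) ^ 2 := by
    rw [Module.card_eq_pow_finrank (K := L3), hL3, hdim2]
  have hδ0 : δ ≠ 0 := by rintro rfl; exact hδ ⟨0, map_zero _⟩
  have hconj : δ ≠ δ ^ q ^ 3 :=
    fun h ↦ hδ (mem_range_algebraMap_of_pow_card_eq_self_s13 (hL3 ▸ h.symm))
  have hhermite : ∑ x, Q x ^ (q ^ 2 - 1) = 0 :=
    FiniteField.sum_pow_comp_eq_zero_of_bijective hbij <| hL3 ▸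
      Nat.sub_lt_sub_right (Nat.one_le_pow _ _ (by omega)) (Nat.pow_lt_pow_right hq2 (by norm_num))
  have hnorm : ∀ x, algebraMap L3 E (Q x) = (algebraMap L3 E x ^ q + δ * algebraMap L3 E x) *
      (algebraMap L3 E x ^ q + δ ^ q ^ 3 * algebraMap L3 E x) := fun x ↦ by
    rw [hQ, add_mul_pow_one_add_char_pow (p := 2) (k := e * 3) (by rw [hq, pow_mul])
      (by rw [← map_pow, ← hL3, FiniteField.pow_card])]
  have hcoeff := sum_pow_sq_sub_one_mul_sub hq hL3 δ (δ ^ q ^ 3)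
  simp_rw [← hnorm, ← map_pow, ← map_sum, hhermite, map_zero, zero_mul] at hcoeff
  refine hconj (CharTwo.eq_of_pow_eq_of_pow_cube_eq hq hδ0 rfl
    (by rw [← pow_mul, ← sq, ← hE, FiniteField.pow_card]) ?_)
  exact sub_eq_zero.1 ((mul_eq_zero.1 hcoeff.symm).resolve_left
    (pow_ne_zero _ (mul_ne_zero hδ0 (pow_ne_zero _ hδ0))))

/-- For `q = 2^e` and `δ ∈ F_{q⁶} \ F_{q³}`, the map
`x ↦ (x^q + δx)^{1+q³}` is not a permutation of `F_{q³}`. -/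
theorem frob_norm_not_perm (q e : ℕ) (he : 0 < e) (hq : q = 2 ^ e)
    (K L3 E : Type) [Field K] [Fintype K] [Field L3] [Field E]
    [Algebra K L3] [Algebra L3 E] [Algebra K E] [IsScalarTower K L3 E]
    (hcard : Fintype.card K = q)
    (hdim : Module.finrank K L3 = 3) (hdim2 : Module.finrank L3 E = 2)
    (δ : E) (hδ : δ ∉ Set.range (algebraMap L3 E))
    (Q : L3 → L3)
    (hQ : ∀ x, algebraMap L3 E (Q x) =
      ((algebraMap L3 E x) ^ q + δ * algebraMap L3 E x) ^ (1 + q ^ 3)) :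
    ¬ Function.Bijective Q :=
  frob_norm_not_perm_general q e hq K L3 E hcard hdim hdim2 δ hδ Q hQ
end

section
/- Let q be an odd prime power and f: F_q → F_q a function representable by a Dembowski–Ostrom polynomial. Then f is a planar function if and only if f is 2-to-1, i.e., every nonzero element of F_q has either 0 or 2 preimages under f (and 0 has exactly one preimage). -/
/-!
A Dembowski–Ostrom function `f` is even, and its polar `D_c f x = f (x + c) - f x - f c` is
additive in `x`, since the Frobenius map is. If `f x = f y` with `x ≠ y`, then evenness gives
`D_c f x = D_c f (-y)` for `c = y - x`, so injectivity of every `D_c f` forces `x = -y`.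
Conversely, if `D_c f x = 0` then also `D_c f (-x) = 0` by additivity, so `f (x + c) = f (c - x)`,
which forces `x = 0` or `c = -c`. Hence `f` is planar iff `f x = f y ↔ x = ± y`, and in odd
characteristic (where `x ≠ -x` for `x ≠ 0`) this says exactly that `f` is 2-to-1.
-/

open Finset Function QuadraticMap

section Planar

variable {G : Type*} [AddCommGroup G]

theorem Function.Even.eq_or_eq_neg_of_injective_polar {R : Type*} [AddCommGroup R] {f : G → R}
    (hf : f.Even) (hinj : ∀ c, c ≠ 0 → Injective (fun x => polar f x c)) {x y : G}
    (hxy : f x = f y) : x = y ∨ x = -y := by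
  by_cases h : x = y
  · exact Or.inl h
  refine Or.inr (hinj (y - x) (sub_ne_zero.mpr (Ne.symm h)) ?_)
  show f (x + (y - x)) - f x - f (y - x) = f (-y + (y - x)) - f (-y) - f (y - x)
  rw [add_sub_cancel, show -y + (y - x) = -x by abel, hf.eq, hf.eq, hxy]

theorem Function.Even.injective_polar {f : G → G} (hf : f.Even) (hG : ∀ x : G, -x = x → x = 0)
    (hadd : ∀ x y c, polar f (x + y) c = polar f x c + polar f y c)
    (hfib : ∀ x y, f x = f y → x = y ∨ x = -y) {c : G} (hc : c ≠ 0) :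
    Injective (fun x => polar f x c) := by
  let D : G →+ G := AddMonoidHom.mk' (fun x => polar f x c) (fun x y => hadd x y c)
  refine (injective_iff_map_eq_zero D).mpr fun x hx => ?_
  have hnx : D (-x) = 0 := by rw [map_neg, hx, neg_zero]
  have hsymm : f (x + c) = f (-x + c) := by
    have hx' : polar f x c = 0 := hx
    have hnx' : polar f (-x) c = 0 := hnx
    simp only [polar, hf.eq] at hx' hnx'
    exact sub_left_inj.mp ((sub_eq_zero.mp hx').trans (sub_eq_zero.mp hnx').symm)
  rcases hfib _ _ hsymm with h | h
  · exact hG x (add_right_cancel h).symm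
  · exact absurd (hG c (add_left_cancel (a := x) (by rw [h]; abel)).symm) hc

theorem Function.Even.planar_iff_eq_or_eq_neg [Finite G] {f : G → G} (hf : f.Even)
    (hG : ∀ x : G, -x = x → x = 0)
    (hadd : ∀ x y c, polar f (x + y) c = polar f x c + polar f y c) :
    (∀ c, c ≠ 0 → Bijective (fun x => polar f x c)) ↔
      ∀ x y, f x = f y → x = y ∨ x = -y :=
  ⟨fun h _ _ => hf.eq_or_eq_neg_of_injective_polar fun c hc => (h c hc).injective,
    fun hfib _ hc => Finite.injective_iff_bijective.mp (hf.injective_polar hG hadd hfib hc)⟩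

end Planar

section Fibers

variable {G R : Type*} [AddCommGroup G] [Fintype G] [DecidableEq R] {f : G → R}

theorem Function.Even.card_fiber_eq_two (hf : f.Even) (hG : ∀ x : G, -x = x → x = 0)
    (hfib : ∀ x y, f x = f y → x = y ∨ x = -y) {x₀ : G} (hx₀ : x₀ ≠ 0) :
    Fintype.card {x // f x = f x₀} = 2 := by
  classical
  have hfiber : ({x | f x = f x₀} : Finset G) = {x₀, -x₀} := by
    ext x
    simp only [mem_filter, mem_univ, true_and, mem_insert, mem_singleton]
    exact ⟨hfib x x₀, by rintro (rfl | rfl) <;> simp [hf.eq]⟩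
  rw [Fintype.card_subtype, hfiber, card_pair fun h => hx₀ (hG x₀ h.symm)]

theorem Function.Even.eq_or_eq_neg_of_card_fiber_le_two (hf : f.Even)
    (hG : ∀ x : G, -x = x → x = 0) {u v : G} (hv : v ≠ 0)
    (hcard : Fintype.card {x // f x = f v} ≤ 2) (huv : f u = f v) : u = v ∨ u = -v := by
  classical
  rw [Fintype.card_subtype] at hcard
  have hpair : ({v, -v} : Finset G) ⊆ ({x | f x = f v} : Finset G) := by
    intro x hx
    simp only [mem_insert, mem_singleton] at hx
    rcases hx with rfl | rfl <;> simp [hf.eq]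
  have hfiber := eq_of_subset_of_card_le hpair
    (hcard.trans (card_pair fun h => hv (hG v h.symm)).ge)
  have hu : u ∈ ({x | f x = f v} : Finset G) := by simpa using huv
  simpa [← hfiber] using hu

theorem Function.Even.eq_or_eq_neg_iff_two_to_one [Zero R] (hf : f.Even) (hf0 : f 0 = 0)
    (hG : ∀ x : G, -x = x → x = 0) :
    (∀ x y, f x = f y → x = y ∨ x = -y) ↔
      ((∀ y : R, y ≠ 0 →
          Fintype.card {x // f x = y} = 0 ∨ Fintype.card {x // f x = y} = 2) ∧
        Fintype.card {x // f x = 0} = 1) := by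
  constructor
  · intro hfib
    refine ⟨fun y hy => ?_, Fintype.card_eq_one_iff.mpr ⟨⟨0, hf0⟩, fun ⟨x, hx⟩ =>
      Subtype.ext ((hfib x 0 (hx.trans hf0.symm)).elim id (·.trans neg_zero))⟩⟩
    by_cases hex : ∃ x₀, f x₀ = y
    · obtain ⟨x₀, rfl⟩ := hex
      exact Or.inr (hf.card_fiber_eq_two hG hfib fun h => hy (h ▸ hf0))
    · exact Or.inl (Fintype.card_eq_zero_iff.mpr ⟨fun x => hex ⟨x.1, x.2⟩⟩)
  · rintro ⟨htwo, hzero⟩ u v huv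
    by_cases hv : f v = 0
    · have : Subsingleton {x // f x = 0} := Fintype.card_le_one_iff_subsingleton.mp hzero.le
      exact Or.inl (congrArg Subtype.val (Subsingleton.elim (α := {x // f x = 0})
        ⟨u, huv.trans hv⟩ ⟨v, hv⟩))
    · refine hf.eq_or_eq_neg_of_card_fiber_le_two hG (fun h => hv (h ▸ hf0)) ?_ huv
      rcases htwo _ hv with h | h <;> omega

end Fibers

section DembowskiOstrom

variable {R ι : Type*} [CommRing R] [Fintype ι]

def dembowskiOstrom (p : ℕ) (e : ι → ℕ) (a : ι → ι → R) (x : R) : R :=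
  ∑ i, ∑ j, a i j * x ^ (p ^ e i + p ^ e j)

variable (p : ℕ) (e : ι → ℕ) (a : ι → ι → R)

theorem dembowskiOstrom_zero (hp : p ≠ 0) : dembowskiOstrom p e a 0 = 0 :=
  sum_eq_zero fun i _ => sum_eq_zero fun j _ => by
    rw [zero_pow (by positivity), mul_zero]

theorem dembowskiOstrom_even (hp : Odd p) : (dembowskiOstrom p e a).Even := fun x => by
  simp only [dembowskiOstrom, (hp.pow.add_odd hp.pow).neg_pow]

variable [ExpChar R p]

theorem polar_pow_add_pow (m n : ℕ) (x c : R) :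
    polar (· ^ (p ^ m + p ^ n)) x c = x ^ p ^ m * c ^ p ^ n + x ^ p ^ n * c ^ p ^ m := by
  simp only [polar, pow_add, add_pow_expChar_pow]
  ring

theorem polar_dembowskiOstrom (x c : R) :
    polar (dembowskiOstrom p e a) x c =
      ∑ i, ∑ j, a i j * (x ^ p ^ e i * c ^ p ^ e j + x ^ p ^ e j * c ^ p ^ e i) := by
  simp only [polar, dembowskiOstrom, ← sum_sub_distrib, ← mul_sub, ← polar_pow_add_pow]

theorem polar_dembowskiOstrom_add_left (x y c : R) :
    polar (dembowskiOstrom p e a) (x + y) c =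
      polar (dembowskiOstrom p e a) x c + polar (dembowskiOstrom p e a) y c := by
  simp only [polar_dembowskiOstrom, add_pow_expChar_pow, ← sum_add_distrib]
  exact sum_congr rfl fun i _ => sum_congr rfl fun j _ => by ring

end DembowskiOstrom

/-- **Weng–Hu criterion.** A function of DO type over `F_q`,
`q` odd, is planar iff it is 2-to-1: every nonzero element has 0 or 2
preimages, and 0 has exactly one preimage. -/
theorem DO_planar_iff_two_to_one (F : Type) [Field F] [Fintype F] [DecidableEq F]
    (hodd : Odd (Fintype.card F))
    (p : ℕ) [hp : Fact p.Prime] [CharP F p]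
    (N : ℕ) (a : Fin N → Fin N → F) (f : F → F)
    (hf : ∀ x, f x = ∑ i : Fin N, ∑ j : Fin N, a i j * x ^ (p ^ (i : ℕ) + p ^ (j : ℕ))) :
    (∀ c : F, c ≠ 0 → Function.Bijective (fun x => f (x + c) - f x - f c)) ↔
      ((∀ y : F, y ≠ 0 →
          Fintype.card {x : F // f x = y} = 0 ∨ Fintype.card {x : F // f x = y} = 2) ∧
        Fintype.card {x : F // f x = 0} = 1) := by
  have hchar : ringChar F ≠ 2 := fun h => by
    have := FiniteField.even_card_iff_char_two.mp h
    rw [Nat.odd_iff] at hodd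
    omega
  have hpodd : Odd p := hp.out.odd_of_ne_two (ringChar.eq F p ▸ hchar)
  have hG : ∀ x : F, -x = x → x = 0 := fun _ =>
    (Ring.eq_self_iff_eq_zero_of_char_ne_two hchar).mp
  have : ExpChar F p := ExpChar.prime hp.out
  obtain rfl : f = dembowskiOstrom p (fun i : Fin N => (i : ℕ)) a := funext hf
  have heven := dembowskiOstrom_even p (fun i : Fin N => (i : ℕ)) a hpodd
  exact (heven.planar_iff_eq_or_eq_neg hG (polar_dembowskiOstrom_add_left _ _ _)).trans
    (heven.eq_or_eq_neg_iff_two_to_one (dembowskiOstrom_zero _ _ _ hp.out.ne_zero) hG)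
end

section
/- Let q be an odd prime power, m ≥ 3, 1 ≤ k ≤ m−1 with gcd(k,m) = 1, ζ ∈ F_{q^{2m}} with ζ^{q^m−1} = −1, and w a nonsquare in F_{q^{2m}}. Suppose A, B, C ∈ F_{q^m} satisfy the F_{q^{2m}}-equation −w A^{q^k} + (4ζ²B − wζ^{2q^k}B^{q^k}) − wζ^{q^k}C^{q^k} = 0. Then A^{q^k} = 2(w^{−q^m} + w^{−1})ζ²B − ζ^{2q^k}B^{q^k} and C^{q^k} = 2ζ^{2−q^k}(w^{−1} − w^{−q^m})B. -/
/-- Solving the linear system obtained by Galois conjugation: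
if `A, B, C ∈ F_{q^m}` satisfy `-wA^{q^k} + (4ζ²B - wζ^{2q^k}B^{q^k}) - wζ^{q^k}C^{q^k} = 0`
in `F_{q^{2m}}`, then `A^{q^k}` and `C^{q^k}` are determined as stated. -/
theorem conjugate_system_solution (q m k : ℕ) (hq : Odd q) (hq' : IsPrimePow q)
    (hm : 3 ≤ m) (hk1 : 1 ≤ k) (hk2 : k ≤ m - 1) (hgcd : Nat.gcd k m = 1)
    (Fm E : Type) [Field Fm] [Fintype Fm] [Field E] [Algebra Fm E]
    (hcard : Fintype.card Fm = q ^ m)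
    (hdim : Module.finrank Fm E = 2)
    (ζ : E) (hζ : ζ ^ (q ^ m - 1) = -1)
    (w : E) (hw : ¬ IsSquare w) (hw0 : w ≠ 0)
    (A B C : Fm)
    (ha : -(w * (algebraMap Fm E A) ^ (q ^ k)) +
        (4 * ζ ^ 2 * algebraMap Fm E B - w * ζ ^ (2 * q ^ k) * (algebraMap Fm E B) ^ (q ^ k)) -
        w * ζ ^ (q ^ k) * (algebraMap Fm E C) ^ (q ^ k) = 0) :
    (algebraMap Fm E A) ^ (q ^ k) =
        2 * ((w ^ (q ^ m))⁻¹ + w⁻¹) * ζ ^ 2 * algebraMap Fm E B -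
          ζ ^ (2 * q ^ k) * (algebraMap Fm E B) ^ (q ^ k) ∧
      (algebraMap Fm E C) ^ (q ^ k) =
        2 * ζ ^ 2 * (ζ ^ (q ^ k))⁻¹ * (w⁻¹ - (w ^ (q ^ m))⁻¹) * algebraMap Fm E B := by
  obtain ⟨p, n, hp, hn, hq_eq⟩ := hq'
  have hp' : p.Prime := hp.nat_prime
  have hq1 : 1 < q := by
    have : 2 ≤ p := hp'.two_le
    calc 1 < p ^ n := Nat.one_lt_pow (by omega) (by omega) |>.trans_eq rfl
    _ = q := hq_eq
  -- characteristic
  haveI : Fact p.Prime := ⟨hp'⟩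
  have hcardp : Fintype.card Fm = p ^ (n * m) := by rw [hcard, ← hq_eq, pow_mul]
  obtain ⟨n0, hchar', hcard'⟩ := FiniteField.card Fm (ringChar Fm)
  have hpchar : p = ringChar Fm := by
    have hd : p ∣ ringChar Fm ^ (n0 : ℕ) := by
      rw [← hcard', hcardp]
      exact dvd_pow_self p (by positivity : 0 < n * m).ne'
    have := hp'.dvd_of_dvd_pow hd
    exact ((Nat.prime_dvd_prime_iff_eq hp' hchar').mp this)
  haveI : CharP Fm p := hpchar ▸ ringChar.charP Fm
  haveI : CharP E p := charP_of_injective_algebraMap (algebraMap Fm E).injective p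
  have hpodd : p ≠ 2 := by
    intro h
    have hdvd : p ∣ q := hq_eq ▸ dvd_pow_self p (by omega : n ≠ 0)
    rw [h] at hdvd
    obtain ⟨c, hc⟩ := hdvd
    have := Nat.odd_iff.mp hq
    omega
  have h2 : (2 : E) ≠ 0 := by
    intro hc
    have hd : p ∣ 2 := (CharP.cast_eq_zero_iff E p 2).mp (by exact_mod_cast hc)
    exact hpodd ((Nat.prime_dvd_prime_iff_eq hp' Nat.prime_two).mp hd)
  -- Frobenius additivity
  have hadd : ∀ x y : E, (x + y) ^ (q ^ m) = x ^ (q ^ m) + y ^ (q ^ m) := by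
    intro x y
    rw [← hq_eq, ← pow_mul]
    exact add_pow_char_pow x y p (n * m)
  have hQodd : Odd (q ^ m) := hq.pow
  have hkodd : Odd (q ^ k) := hq.pow
  have hζ0 : ζ ≠ 0 := by
    intro h
    rw [h, zero_pow (by have := Nat.one_lt_pow (by omega : m ≠ 0) hq1; omega)] at hζ
    exact one_ne_zero (neg_eq_zero.mp hζ.symm)
  have hζQ : ζ ^ (q ^ m) = -ζ := by
    have h1 : q ^ m - 1 + 1 = q ^ m := by
      have := Nat.one_lt_pow (by omega : m ≠ 0) hq1; omega
    calc ζ ^ (q ^ m) = ζ ^ (q ^ m - 1) * ζ := by rw [← pow_succ, h1]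
    _ = -ζ := by rw [hζ]; ring
  -- fixed elements
  have hfix : ∀ a : Fm, (algebraMap Fm E a) ^ (q ^ m) = algebraMap Fm E a := by
    intro a
    rw [← map_pow, ← hcard, FiniteField.pow_card]
  have hfixk : ∀ a : Fm, ((algebraMap Fm E a) ^ (q ^ k)) ^ (q ^ m) = (algebraMap Fm E a) ^ (q ^ k) := by
    intro a
    rw [← pow_mul, mul_comm, pow_mul, hfix]
  have hsQ : (ζ ^ (q ^ k)) ^ (q ^ m) = -(ζ ^ (q ^ k)) := by
    rw [← pow_mul, mul_comm, pow_mul, hζQ, hkodd.neg_pow]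
  have hrQ : (ζ ^ (2 * q ^ k)) ^ (q ^ m) = ζ ^ (2 * q ^ k) := by
    rw [← pow_mul, mul_comm, pow_mul, hζQ, Even.neg_pow ⟨q ^ k, by ring⟩]
  have htQ : (ζ ^ 2) ^ (q ^ m) = ζ ^ 2 := by
    rw [← pow_mul, mul_comm, pow_mul, hζQ, neg_pow_two]
  have h4Q : (4 : E) ^ (q ^ m) = 4 := by
    have : (4 : E) = algebraMap Fm E 4 := by rw [map_ofNat]
    rw [this, hfix]
  -- conjugated equation
  set X := (algebraMap Fm E A) ^ (q ^ k) with hX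
  set Y := algebraMap Fm E B with hY
  set Z := (algebraMap Fm E B) ^ (q ^ k) with hZ
  set U := (algebraMap Fm E C) ^ (q ^ k) with hU
  have ha2 : -(w ^ (q ^ m) * X) + (4 * ζ ^ 2 * Y - w ^ (q ^ m) * ζ ^ (2 * q ^ k) * Z)
      + w ^ (q ^ m) * ζ ^ (q ^ k) * U = 0 := by
    have h := congrArg (· ^ (q ^ m)) ha
    rw [sub_eq_add_neg, hadd, hadd, zero_pow (by positivity : q ^ m ≠ 0)] at h
    rw [hQodd.neg_pow, hQodd.neg_pow, sub_eq_add_neg, hadd, hQodd.neg_pow] at h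
    rw [mul_pow, mul_pow, mul_pow, mul_pow, mul_pow, mul_pow, mul_pow] at h
    rw [hfixk, hfixk, hfixk, hfix, hsQ, hrQ, htQ, h4Q] at h
    linear_combination h
  have hwQ : w ^ (q ^ m) ≠ 0 := pow_ne_zero _ hw0
  have hsk : ζ ^ (q ^ k) ≠ 0 := pow_ne_zero _ hζ0
  constructor
  · have hA' : 2 * (w ^ (q ^ m) * w) * X =
        4 * w * ζ ^ 2 * Y + 4 * w ^ (q ^ m) * ζ ^ 2 * Y
          - 2 * (w ^ (q ^ m) * w) * ζ ^ (2 * q ^ k) * Z := by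
      linear_combination (-(w ^ (q ^ m))) * ha - w * ha2
    have hrhs : 2 * (w ^ (q ^ m) * w) *
        (2 * ((w ^ (q ^ m))⁻¹ + w⁻¹) * ζ ^ 2 * Y - ζ ^ (2 * q ^ k) * Z) =
        4 * w * ζ ^ 2 * Y + 4 * w ^ (q ^ m) * ζ ^ 2 * Y
          - 2 * (w ^ (q ^ m) * w) * ζ ^ (2 * q ^ k) * Z := by
      field_simp
      ring
    exact mul_left_cancel₀ (mul_ne_zero h2 (mul_ne_zero hwQ hw0)) (hA'.trans hrhs.symm)
  · have hC' : 2 * (w ^ (q ^ m) * w) * ζ ^ (q ^ k) * U =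
        4 * w ^ (q ^ m) * ζ ^ 2 * Y - 4 * w * ζ ^ 2 * Y := by
      linear_combination w * ha2 - w ^ (q ^ m) * ha
    have hrhs : 2 * (w ^ (q ^ m) * w) * ζ ^ (q ^ k) *
        (2 * ζ ^ 2 * (ζ ^ (q ^ k))⁻¹ * (w⁻¹ - (w ^ (q ^ m))⁻¹) * Y) =
        4 * w ^ (q ^ m) * ζ ^ 2 * Y - 4 * w * ζ ^ 2 * Y := by
      field_simp
      ring
    exact mul_left_cancel₀ (mul_ne_zero (mul_ne_zero h2 (mul_ne_zero hwQ hw0)) hsk)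
      (hC'.trans hrhs.symm)
end

section
/- Let q be even and n = 4. Let L(X) = X^{q^3} + aX^{q^2} + bX^q with a, b ∈ F_{q^4}, and set c_1 = b^q + a^{1+q} and c_2 = 1 + b^{1+q^2}. If c_1 = c_2 = 0, then there exists u ∈ F_{q^4}^* such that a = u^{q^3−1}, b = u^{q^2−1}, and L(x) = u^{-1}·Tr_{F_{q^4}/F_q}(u^q x) + u^{q−1}x for all x ∈ F_{q^4}. -/
/-!
In characteristic 2 the hypotheses say `b ^ (1 + q²) = 1` and `b ^ q = a ^ (1 + q)`, so
`N(a) = a ^ ((1 + q)(1 + q²)) = 1`. Hilbert 90 for the cyclic extension `L/K`, generated by the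
Frobenius `σ : x ↦ x ^ q`, writes `a = σ⁻¹(u) / u = u ^ (q³ - 1)`; applying `σ` to
`b ^ q = a ^ (1 + q)` then gives `b = σ²(u) / u = u ^ (q² - 1)`. Finally
`u⁻¹ · Tr(u ^ q x) = Σᵢ u ^ (q ^ (i + 1) - 1) x ^ (q ^ i)` is `L(x) + u ^ (q - 1) x`.
-/

namespace FiniteField

section

variable {K : Type*} [Field K] [Fintype K]

theorem two_eq_zero_of_even_card {R : Type*} [Semiring R] [Algebra K R]
    (hK : Even (Fintype.card K)) : (2 : R) = 0 := by
  have : CharP K 2 := ringChar.eq_iff.mp (even_card_iff_char_two.mpr (Nat.even_iff.mp hK))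
  rw [← map_ofNat (algebraMap K R) 2, CharTwo.two_eq_zero, map_zero]

end

variable {K L : Type} [Field K] [Fintype K] [Field L] [Fintype L] [Algebra K L]

theorem pow_card_pow_finrank (x : L) : x ^ Fintype.card K ^ Module.finrank K L = x := by
  rw [← Module.card_eq_pow_finrank, FiniteField.pow_card]

theorem exists_div_pow_card_eq_of_norm_eq_one {x : L} (hx : Algebra.norm K x = 1) :
    ∃ y : Lˣ, (y : L) / (y : L) ^ Fintype.card K = x := by
  have hgen : ∀ σ, σ ∈ Subgroup.zpowers (frobeniusAlgEquivOfAlgebraic K L) := fun σ => by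
    obtain ⟨n, rfl⟩ := (bijective_frobeniusAlgEquivOfAlgebraic_pow K L).2 σ
    exact Subgroup.npow_mem_zpowers _ _
  exact groupCohomology.exists_div_of_norm_eq_one hgen hx

theorem exists_pow_card_pow_eq_mul_self_of_norm_eq_one {n : ℕ}
    (hn : Module.finrank K L = n + 1) {a : L} (ha : Algebra.norm K a = 1) :
    ∃ u : L, u ≠ 0 ∧ u ^ Fintype.card K ^ n = a * u := by
  obtain ⟨y, rfl⟩ := exists_div_pow_card_eq_of_norm_eq_one ha
  refine ⟨(y : L) ^ Fintype.card K, by simp, ?_⟩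
  rw [← pow_mul, ← pow_succ', ← hn, pow_card_pow_finrank, div_mul_cancel₀ _ (by simp)]

theorem pow_card_pow_eq_mul_self_of_pow_card_eq {m : ℕ}
    (hm : Module.finrank K L = m + 2) {a b u : L}
    (hau : u ^ Fintype.card K ^ (m + 1) = a * u)
    (hb : b ^ Fintype.card K = a ^ (1 + Fintype.card K)) :
    u ^ Fintype.card K ^ m = b * u := by
  set q := Fintype.card K
  apply (frobeniusAlgEquivOfAlgebraic K L).injective
  simp only [coe_frobeniusAlgEquivOfAlgebraic]
  have hu : (a * u) ^ q = u := by
    rw [← hau, ← pow_mul, ← pow_succ, ← hm, pow_card_pow_finrank]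
  calc (u ^ q ^ m) ^ q = a * u := by rw [← pow_mul, ← pow_succ, hau]
    _ = (b * u) ^ q := by rw [mul_pow, hb, pow_add, pow_one, mul_assoc, ← mul_pow, hu]

theorem algebraMap_trace_eq_of_finrank_eq_four (hdim : Module.finrank K L = 4) (x : L) :
    algebraMap K L (Algebra.trace K L x) =
      x + x ^ Fintype.card K + x ^ Fintype.card K ^ 2 + x ^ Fintype.card K ^ 3 := by
  simp [algebraMap_trace_eq_sum_pow, hdim, Finset.sum_range_succ]

theorem inv_mul_algebraMap_trace_pow_card_mul (hdim : Module.finrank K L = 4) {u : L}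
    (hu : u ≠ 0) (x : L) :
    u⁻¹ * algebraMap K L (Algebra.trace K L (u ^ Fintype.card K * x)) =
      u ^ (Fintype.card K - 1) * x + u ^ (Fintype.card K ^ 2 - 1) * x ^ Fintype.card K +
        u ^ (Fintype.card K ^ 3 - 1) * x ^ Fintype.card K ^ 2 + x ^ Fintype.card K ^ 3 := by
  set q := Fintype.card K
  have hq : 1 ≤ q := Fintype.card_pos
  have hu4 : u ^ q ^ 4 = u := hdim ▸ pow_card_pow_finrank u
  have hpow (k : ℕ) : (u ^ q * x) ^ q ^ k = u ^ q ^ (k + 1) * x ^ q ^ k := by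
    rw [mul_pow, ← pow_mul, ← pow_succ']
  have hpow1 : (u ^ q * x) ^ q = u ^ q ^ 2 * x ^ q := by simpa using hpow 1
  rw [algebraMap_trace_eq_of_finrank_eq_four hdim, hpow1, hpow 2, hpow 3, hu4,
    pow_sub₀ u hu hq, pow_sub₀ u hu (Nat.one_le_pow _ _ hq), pow_sub₀ u hu (Nat.one_le_pow _ _ hq)]
  field_simp

end FiniteField

theorem degenerate_L_is_trace_form_general (q : ℕ) (hq : Even q)
    (K Lf : Type) [Field K] [Fintype K] [Field Lf] [Fintype Lf] [Algebra K Lf]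
    (hcard : Fintype.card K = q)
    (hdim : Module.finrank K Lf = 4)
    (a b : Lf)
    (hc1 : b ^ q + a ^ (1 + q) = 0)
    (hc2 : 1 + b ^ (1 + q ^ 2) = 0)
    (L : Lf → Lf)
    (hL : ∀ x, L x = x ^ (q ^ 3) + a * x ^ (q ^ 2) + b * x ^ q) :
    ∃ u : Lf, u ≠ 0 ∧ a = u ^ (q ^ 3 - 1) ∧ b = u ^ (q ^ 2 - 1) ∧
      ∀ x : Lf, L x =
        u⁻¹ * algebraMap K Lf (Algebra.trace K Lf (u ^ q * x)) + u ^ (q - 1) * x := by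
  subst hcard
  set q := Fintype.card K
  have htwo : (2 : Lf) = 0 := FiniteField.two_eq_zero_of_even_card hq
  have hbq : b ^ q = a ^ (1 + q) := by linear_combination hc1 - a ^ (1 + q) * htwo
  have hnorm : Algebra.norm K a = 1 := by
    apply FaithfulSMul.algebraMap_injective K Lf
    rw [FiniteField.algebraMap_norm_eq_pow_sum, hdim, Nat.card_eq_fintype_card, map_one]
    calc a ^ ∑ i ∈ Finset.range 4, q ^ i = (a ^ (1 + q)) ^ (1 + q ^ 2) := by
          rw [← pow_mul]
          congr 1
          simp only [Finset.sum_range_succ, Finset.sum_range_zero]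
          ring
      _ = (b ^ (1 + q ^ 2)) ^ q := by rw [← hbq, ← pow_mul, ← pow_mul, mul_comm]
      _ = 1 := by rw [show b ^ (1 + q ^ 2) = 1 by linear_combination hc2 - htwo, one_pow]
  obtain ⟨u, hu, hau⟩ :=
    FiniteField.exists_pow_card_pow_eq_mul_self_of_norm_eq_one (n := 3) hdim hnorm
  have hbu := FiniteField.pow_card_pow_eq_mul_self_of_pow_card_eq (m := 2) hdim hau hbq
  have ha : a = u ^ (q ^ 3 - 1) :=
    mul_right_cancel₀ hu (by rw [pow_sub_one_mul (by positivity), hau])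
  have hb : b = u ^ (q ^ 2 - 1) :=
    mul_right_cancel₀ hu (by rw [pow_sub_one_mul (by positivity), hbu])
  refine ⟨u, hu, ha, hb, fun x => ?_⟩
  rw [hL, FiniteField.inv_mul_algebraMap_trace_pow_card_mul hdim hu, ha, hb]
  linear_combination (-(u ^ (q - 1) * x)) * htwo

/-- **case `c₁ = c₂ = 0` in Theorem on `n = 4`.** If
`L(X) = X^{q³} + aX^{q²} + bX^q` with `b^q + a^{1+q} = 0` and `1 + b^{1+q²} = 0`,
then `a = u^{q³-1}`, `b = u^{q²-1}` for some `u ≠ 0`, and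
`L(x) = u⁻¹·Tr_{F_{q⁴}/F_q}(u^q x) + u^{q-1} x`. -/
theorem degenerate_L_is_trace_form (q : ℕ) (hq : Even q) (hq' : IsPrimePow q)
    (K Lf : Type) [Field K] [Fintype K] [Field Lf] [Fintype Lf] [Algebra K Lf]
    (hcard : Fintype.card K = q)
    (hdim : Module.finrank K Lf = 4)
    (a b : Lf)
    (hc1 : b ^ q + a ^ (1 + q) = 0)
    (hc2 : 1 + b ^ (1 + q ^ 2) = 0)
    (L : Lf → Lf)
    (hL : ∀ x, L x = x ^ (q ^ 3) + a * x ^ (q ^ 2) + b * x ^ q) :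
    ∃ u : Lf, u ≠ 0 ∧ a = u ^ (q ^ 3 - 1) ∧ b = u ^ (q ^ 2 - 1) ∧
      ∀ x : Lf, L x =
        u⁻¹ * algebraMap K Lf (Algebra.trace K Lf (u ^ q * x)) + u ^ (q - 1) * x :=
  degenerate_L_is_trace_form_general q hq K Lf hcard hdim a b hc1 hc2 L hL
end

section
/- Let q be even and δ ∈ F_{q^6} \ F_{q^3} with h := (δ^{-1} + δ^{-q^3})^{-1} ∈ F_q^*. Set r = 1 + δ^{-1}. Then the minimal polynomial of rh over F_{q^3} is X² + X + r^{1+q^3}h², and consequently Tr_{F_{q^3}/F_2}(h²·r^{1+q^3}) = 1. -/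
/-! Put `u = r h` and let `φ x = x ^ q³` be the Frobenius of `E / L3`. As `h` is `φ`-fixed and
`r + φ r = δ⁻¹ + (φ δ)⁻¹ = h⁻¹`, in characteristic two `φ u = u + 1`. Hence `u ∉ L3`, while
`r ^ (1 + q³) h² = u φ(u) = u² + u` is `φ`-fixed, i.e. equal to some `d ∈ L3`; so `X² + X + d` is the
minimal polynomial of `u`. Its irreducibility says that `d` is not of the form `c² + c`. The image of
the Artin–Schreier map `c ↦ c² + c` lies in the kernel of `Tr_{L3/𝔽₂}` because `Tr (c²) = Tr c`, and
both are hyperplanes since the map has kernel `𝔽₂`; hence `Tr d = 1`. -/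

open Polynomial FiniteField

theorem minpoly_eq_of_natDegree_eq_two {L E : Type*} [Field L] [Ring E] [Nontrivial E]
    [Algebra L E] {x : E} (hx : x ∉ Set.range (algebraMap L E)) {f : L[X]} (hf : f.Monic)
    (hdeg : f.natDegree = 2) (hfx : aeval x f = 0) : minpoly L x = f := by
  have hint : IsIntegral L x := ⟨f, hf, hfx⟩
  refine (eq_of_monic_of_dvd_of_natDegree_le (minpoly.monic hint) hf (minpoly.dvd L x hfx) ?_).symm
  have hne : (minpoly L x).natDegree ≠ 1 := fun h ↦ hx (minpoly.natDegree_eq_one_iff.mp h)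
  have hpos := minpoly.natDegree_pos hint
  omega

namespace FiniteField

theorem frobeniusAlgHom_apply_eq_self_iff (L E : Type*) [Field L] [Fintype L] [Field E] [Finite E]
    [Algebra L E] (x : E) : frobeniusAlgHom L E x = x ↔ x ∈ Set.range (algebraMap L E) := by
  rw [IsGalois.mem_range_algebraMap_iff_fixed]
  refine ⟨fun hx σ ↦ ?_, fun hx ↦ hx (frobeniusAlgEquivOfAlgebraic L E)⟩
  obtain ⟨n, rfl⟩ := (bijective_frobeniusAlgEquivOfAlgebraic_pow L E).2 σ
  rw [AlgEquiv.coe_pow]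
  exact Function.iterate_fixed hx n

section ArtinSchreier

variable (F : Type*) [Field F] [Algebra (ZMod 2) F]

noncomputable def artinSchreier : F →ₗ[ZMod 2] F :=
  (frobeniusAlgHom (ZMod 2) F).toLinearMap + LinearMap.id

variable {F}

theorem artinSchreier_apply (x : F) : artinSchreier F x = x ^ 2 + x := by
  simp [artinSchreier, ZMod.card]

variable [Finite F]

theorem trace_sq (x : F) : Algebra.trace (ZMod 2) F (x ^ 2) = Algebra.trace (ZMod 2) F x := by
  simpa [ZMod.card] using Algebra.trace_eq_of_algEquiv (frobeniusAlgEquivOfAlgebraic (ZMod 2) F) x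

theorem ker_artinSchreier : LinearMap.ker (artinSchreier F) = (ZMod 2) ∙ (1 : F) := by
  have : CharP F 2 := charP_of_injective_algebraMap' (ZMod 2) 2
  ext x
  have hroots : x ^ 2 + x = 0 ↔ x = 0 ∨ x = 1 := by
    rw [show x ^ 2 + x = x * (x - 1) by rw [CharTwo.sub_eq_add]; ring, mul_eq_zero, sub_eq_zero]
  rw [LinearMap.mem_ker, artinSchreier_apply, hroots, Submodule.mem_span_singleton]
  constructor
  · rintro (rfl | rfl)
    exacts [⟨0, zero_smul _ _⟩, ⟨1, one_smul _ _⟩]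
  · rintro ⟨a, rfl⟩
    fin_cases a
    exacts [Or.inl (zero_smul _ _), Or.inr (one_smul _ _)]

theorem range_artinSchreier_eq_ker_trace :
    LinearMap.range (artinSchreier F) = LinearMap.ker (Algebra.trace (ZMod 2) F) := by
  have : CharP F 2 := charP_of_injective_algebraMap' (ZMod 2) 2
  refine Submodule.eq_of_le_of_finrank_eq ?_ ?_
  · rintro _ ⟨x, rfl⟩
    rw [LinearMap.mem_ker, artinSchreier_apply, map_add, trace_sq, CharTwo.add_self_eq_zero]
  · have hAS := LinearMap.finrank_range_add_finrank_ker (artinSchreier F)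
    have htr := LinearMap.finrank_range_add_finrank_ker (Algebra.trace (ZMod 2) F)
    rw [ker_artinSchreier, finrank_span_singleton one_ne_zero] at hAS
    rw [LinearMap.range_eq_top.mpr (Algebra.trace_surjective (ZMod 2) F), finrank_top,
      Module.finrank_self] at htr
    omega

theorem trace_eq_one_of_irreducible {d : F} (hd : Irreducible (X ^ 2 + X + C d)) :
    Algebra.trace (ZMod 2) F d = 1 := by
  have : CharP F 2 := charP_of_injective_algebraMap' (ZMod 2) 2
  have hnot : d ∉ LinearMap.range (artinSchreier F) := by
    rintro ⟨c, hc⟩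
    have hroot : IsRoot (X ^ 2 + X + C d) c := by
      simp [← hc, artinSchreier_apply, CharTwo.add_self_eq_zero]
    have hdeg : (X ^ 2 + X + C d).degree = 2 := by compute_degree!
    have := degree_eq_one_of_irreducible_of_root hd hroot
    rw [hdeg] at this
    exact absurd this (by decide)
  rw [range_artinSchreier_eq_ker_trace, LinearMap.mem_ker] at hnot
  generalize Algebra.trace (ZMod 2) F d = t at hnot ⊢
  fin_cases t
  exacts [absurd rfl hnot, rfl]

end ArtinSchreier

end FiniteField

theorem map_sq_add_self_of_map_eq_add_one {E R : Type*} [CommRing E] [CharP E 2] [FunLike R E E]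
    [RingHomClass R E E] {σ : R} {u : E} (hu : σ u = u + 1) : σ (u ^ 2 + u) = u ^ 2 + u := by
  rw [map_add, map_pow, hu, CharTwo.add_sq, one_pow, add_add_add_comm, CharTwo.add_self_eq_zero,
    add_zero]

theorem map_one_add_inv_mul_eq_add_one {E R : Type*} [Field E] [CharP E 2] [FunLike R E E]
    [RingHomClass R E E] (σ : R) {δ h : E} (hh : h = (δ⁻¹ + (σ δ)⁻¹)⁻¹) (h0 : h ≠ 0)
    (hσh : σ h = h) : σ ((1 + δ⁻¹) * h) = (1 + δ⁻¹) * h + 1 := by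
  have hs : (δ⁻¹ + (σ δ)⁻¹) * h = 1 := by
    rw [hh, mul_inv_cancel₀ fun hs ↦ h0 (by rw [hh, hs, inv_zero])]
  calc σ ((1 + δ⁻¹) * h) = (1 + (σ δ)⁻¹) * h := by rw [map_mul, hσh, map_add, map_one, map_inv₀]
    _ = (1 + δ⁻¹) * h + (δ⁻¹ + (σ δ)⁻¹) * h := by
      linear_combination (-(δ⁻¹ * h)) * CharTwo.two_eq_zero (R := E)
    _ = (1 + δ⁻¹) * h + 1 := by rw [hs]

theorem minpoly_rh_and_trace_general (q : ℕ)
    (K L3 E : Type) [Field K] [Fintype K] [Field L3] [Field E]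
    [Algebra K L3] [Algebra L3 E] [Algebra K E] [IsScalarTower K L3 E]
    [Algebra (ZMod 2) L3]
    (hcard : Fintype.card K = q)
    (hdim : Module.finrank K L3 = 3) (hdim2 : Module.finrank L3 E = 2)
    (δ : E)
    (h : E) (hh : h = (δ⁻¹ + (δ ^ (q ^ 3))⁻¹)⁻¹)
    (hhK : ∃ c : K, c ≠ 0 ∧ h = algebraMap K E c)
    (r : E) (hr : r = 1 + δ⁻¹) :
    ∃ d : L3, algebraMap L3 E d = r ^ (1 + q ^ 3) * h ^ 2 ∧
      minpoly L3 (r * h) = Polynomial.X ^ 2 + Polynomial.X + Polynomial.C d ∧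
      Algebra.trace (ZMod 2) L3 d = 1 := by
  have : CharP L3 2 := charP_of_injective_algebraMap' (ZMod 2) 2
  have : CharP E 2 := charP_of_injective_algebraMap' L3 2
  have : Module.Finite K L3 := Module.finite_of_finrank_eq_succ hdim
  have : Module.Finite L3 E := Module.finite_of_finrank_eq_succ hdim2
  have : Finite L3 := Module.finite_of_finite K
  have : Finite E := Module.finite_of_finite L3
  let _ : Fintype L3 := Fintype.ofFinite L3
  set φ := frobeniusAlgHom L3 E
  have hφ (x : E) : φ x = x ^ q ^ 3 := by
    rw [coe_frobeniusAlgHom, Module.card_eq_pow_finrank (K := K), hcard, hdim]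
  obtain ⟨c, hc0, hc⟩ := hhK
  have hφh : φ h = h := by
    rw [hc, IsScalarTower.algebraMap_apply K L3 E, φ.commutes]
  have hu : φ (r * h) = r * h + 1 := by
    rw [← hφ] at hh
    subst hr
    exact map_one_add_inv_mul_eq_add_one φ hh (hc ▸ (_root_.map_ne_zero _).mpr hc0) hφh
  obtain ⟨d, hd⟩ := (frobeniusAlgHom_apply_eq_self_iff L3 E _).mp
    (map_sq_add_self_of_map_eq_add_one hu)
  have hnorm : r ^ (1 + q ^ 3) * h ^ 2 = (r * h) ^ 2 + r * h := calc
    r ^ (1 + q ^ 3) * h ^ 2 = (r * h) * φ (r * h) := by rw [hφ, mul_pow, ← hφ h, hφh]; ring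
    _ = (r * h) ^ 2 + r * h := by rw [hu]; ring
  have hmin : minpoly L3 (r * h) = X ^ 2 + X + C d := by
    refine minpoly_eq_of_natDegree_eq_two ?_ (by monicity!) (by compute_degree!) ?_
    · rw [← frobeniusAlgHom_apply_eq_self_iff, hu]
      simp
    · simp only [map_add, map_pow, aeval_X, aeval_C, hd]
      exact CharTwo.add_self_eq_zero _
  refine ⟨d, hd.trans hnorm.symm, hmin, trace_eq_one_of_irreducible ?_⟩
  rw [← hmin]
  exact minpoly.irreducible (IsIntegral.of_finite L3 _)

/-- With `h = (δ⁻¹ + δ^{-q³})⁻¹ ∈ F_q^*` and `r = 1 + δ⁻¹`,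
the minimal polynomial of `rh` over `F_{q³}` is `X² + X + r^{1+q³}h²`, and
consequently `Tr_{F_{q³}/F₂}(h²r^{1+q³}) = 1`. -/
theorem minpoly_rh_and_trace (q e : ℕ) (he : 0 < e) (hq : q = 2 ^ e)
    (K L3 E : Type) [Field K] [Fintype K] [Field L3] [Field E]
    [Algebra K L3] [Algebra L3 E] [Algebra K E] [IsScalarTower K L3 E]
    [Algebra (ZMod 2) L3]
    (hcard : Fintype.card K = q)
    (hdim : Module.finrank K L3 = 3) (hdim2 : Module.finrank L3 E = 2)
    (δ : E) (hδ : δ ∉ Set.range (algebraMap L3 E))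
    (h : E) (hh : h = (δ⁻¹ + (δ ^ (q ^ 3))⁻¹)⁻¹)
    (hhK : ∃ c : K, c ≠ 0 ∧ h = algebraMap K E c)
    (r : E) (hr : r = 1 + δ⁻¹) :
    ∃ d : L3, algebraMap L3 E d = r ^ (1 + q ^ 3) * h ^ 2 ∧
      minpoly L3 (r * h) = Polynomial.X ^ 2 + Polynomial.X + Polynomial.C d ∧
      Algebra.trace (ZMod 2) L3 d = 1 :=
  minpoly_rh_and_trace_general q K L3 E hcard hdim hdim2 δ h hh hhK r hr
end
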